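/- arXiv:1612.02410 — 6 statements merged into one kernel-verified Lean document; each statement's English description precedes it below -/
import Mathlib

section
/- Let (a_k)_{k≥1} be a sequence of complex numbers with a_k/k → 0 as k → ∞. Suppose that the sequence (a_{2k})_{k≥1} is Cesàro convergent to L ∈ ℂ and that the series ∑_{k≥1}(a_{2k−1} + a_{2k}) is Cesàro summable to S ∈ ℂ. Then the series ∑_{k≥1} a_k is Cesàro summable, and its Cesàro sum equals S − L/2. -/
open Filter Finset

private lemma cinv_aux : Tendsto (fun n : ℕ => 1/(n:ℂ)) atTop (nhds 0) := by
  have h : Tendsto (fun n : ℕ => 1 / (n:ℝ)) atTop (nhds 0) := tendsto_one_div_atTop_nhds_zero_nat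
  have h2 := (Complex.continuous_ofReal.tendsto 0).comp h
  exact h2.congr (fun n => by simp [Function.comp])

private lemma evenodd_aux {f : ℕ → ℂ} {x : ℂ}
    (he : Tendsto (fun n => f (2*n)) atTop (nhds x))
    (ho : Tendsto (fun n => f (2*n+1)) atTop (nhds x)) : Tendsto f atTop (nhds x) := by
  rw [Metric.tendsto_atTop] at *
  intro ε hε
  obtain ⟨N₁, h₁⟩ := he ε hε
  obtain ⟨N₂, h₂⟩ := ho ε hε
  refine ⟨2*N₁ + 2*N₂ + 1, fun n hn => ?_⟩
  rcases Nat.even_or_odd n with ⟨k, hk⟩ | ⟨k, hk⟩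
  · have h : n = 2*k := by omega
    rw [h]; exact h₁ k (by omega)
  · have h : n = 2*k+1 := by omega
    rw [h]; exact h₂ k (by omega)

private lemma pairsum_aux (a : ℕ → ℂ) (n : ℕ) :
    ∑ k ∈ Icc 1 n, (a (2*k-1) + a (2*k)) = ∑ k ∈ Icc 1 (2*n), a k := by
  induction n with
  | zero => simp
  | succ n ih =>
    rw [Finset.sum_Icc_succ_top (by omega)]
    have h2 : 2*(n+1) = (2*n+1)+1 := by omega
    rw [h2, Finset.sum_Icc_succ_top (by omega), Finset.sum_Icc_succ_top (by omega), ih]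
    have h3 : 2*n+1+1-1 = 2*n+1 := by omega
    rw [h3]
    ring

private lemma splitsum_aux (a : ℕ → ℂ) (n : ℕ) :
    ∑ ℓ ∈ Icc 1 (2*n), (∑ k ∈ Icc 1 ℓ, a k)
    = 2 * ∑ j ∈ Icc 1 n, (∑ k ∈ Icc 1 (2*j), a k) - ∑ j ∈ Icc 1 n, a (2*j) := by
  induction n with
  | zero => simp
  | succ n ih =>
    have h2 : 2*(n+1) = (2*n+1)+1 := by omega
    rw [h2, Finset.sum_Icc_succ_top (by omega), Finset.sum_Icc_succ_top (by omega), ih,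
      Finset.sum_Icc_succ_top (show 1 ≤ n+1 by omega), Finset.sum_Icc_succ_top (show 1 ≤ n+1 by omega),
      h2, Finset.sum_Icc_succ_top (show 1 ≤ 2*n+1+1 by omega),
      Finset.sum_Icc_succ_top (show 1 ≤ 2*n+1 by omega)]
    ring

/-- Lemma on Cesàro summation: if `a k / k → 0`, the even-indexed subsequence
`(a (2k))` is Cesàro convergent to `L`, and the series `∑ (a (2k-1) + a (2k))`
is Cesàro summable to `S`, then the series `∑ a k` is Cesàro summable to `S - L/2`. -/
theorem cesaro_pairwise_even (a : ℕ → ℂ) (L S : ℂ)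
    (hsmall : Tendsto (fun k : ℕ => a k / (k : ℂ)) atTop (nhds 0))
    (heven : Tendsto (fun k : ℕ => (1 / (k : ℂ)) * ∑ j ∈ Icc 1 k, a (2 * j))
      atTop (nhds L))
    (hpairs : Tendsto
      (fun m : ℕ => (1 / (m : ℂ)) * ∑ ℓ ∈ Icc 1 m, ∑ k ∈ Icc 1 ℓ, (a (2 * k - 1) + a (2 * k)))
      atTop (nhds S)) :
    Tendsto (fun m : ℕ => (1 / (m : ℂ)) * ∑ ℓ ∈ Icc 1 m, ∑ k ∈ Icc 1 ℓ, a k)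
      atTop (nhds (S - L / 2)) := by
  set T : ℕ → ℂ := fun n => ∑ k ∈ Icc 1 (2*n), a k with hT
  -- restate hpairs in terms of T
  have hpairs' : Tendsto (fun m : ℕ => (1/(m:ℂ)) * ∑ ℓ ∈ Icc 1 m, T ℓ) atTop (nhds S) := by
    refine hpairs.congr (fun m => ?_)
    congr 1
    exact Finset.sum_congr rfl (fun ℓ _ => pairsum_aux a ℓ)
  -- Even Cesàro means converge to S - L/2
  have hE : Tendsto (fun n : ℕ => (1/((2*n : ℕ):ℂ)) * ∑ ℓ ∈ Icc 1 (2*n), ∑ k ∈ Icc 1 ℓ, a k)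
      atTop (nhds (S - L/2)) := by
    have key : ∀ n : ℕ, (1/((2*n : ℕ):ℂ)) * ∑ ℓ ∈ Icc 1 (2*n), ∑ k ∈ Icc 1 ℓ, a k
        = (1/(n:ℂ)) * ∑ j ∈ Icc 1 n, T j - (1/2) * ((1/(n:ℂ)) * ∑ j ∈ Icc 1 n, a (2*j)) := by
      intro n
      rw [splitsum_aux a n]
      push_cast
      have hi : ((2:ℂ)*n)⁻¹ = 2⁻¹ * (n:ℂ)⁻¹ := by
        rw [mul_inv]
      simp only [one_div, hi]
      ring
    have hlim : Tendsto (fun n : ℕ => (1/(n:ℂ)) * ∑ j ∈ Icc 1 n, T j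
        - (1/2) * ((1/(n:ℂ)) * ∑ j ∈ Icc 1 n, a (2*j))) atTop (nhds (S - (1/2)*L)) :=
      hpairs'.sub (heven.const_mul (1/2))
    have : S - (1/2)*L = S - L/2 := by ring
    rw [this] at hlim
    exact hlim.congr (fun n => (key n).symm)
  -- T n / n → 0
  have hTn : Tendsto (fun n : ℕ => T n / (n:ℂ)) atTop (nhds 0) := by
    set σ : ℕ → ℂ := fun m => (1/(m:ℂ)) * ∑ ℓ ∈ Icc 1 m, T ℓ with hσdef
    have hσ : Tendsto σ atTop (nhds S) := hpairs'
    have hσ' : Tendsto (fun n : ℕ => σ (n-1)) atTop (nhds S) :=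
      hσ.comp (tendsto_sub_atTop_nat 1)
    have hfrac : Tendsto (fun n : ℕ => (((n-1 : ℕ)):ℂ)/(n:ℂ)) atTop (nhds 1) := by
      have h1 : Tendsto (fun n : ℕ => 1 - 1/(n:ℂ)) atTop (nhds 1) := by
        simpa using (tendsto_const_nhds : Tendsto (fun _ : ℕ => (1:ℂ)) atTop _).sub cinv_aux
      refine h1.congr' ?_
      filter_upwards [eventually_ge_atTop 1] with n hn
      have hn0 : (n:ℂ) ≠ 0 := Nat.cast_ne_zero.mpr (by omega)
      have hc : (((n-1 : ℕ)):ℂ) = (n:ℂ) - 1 := by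
        push_cast [hn]
        ring
      rw [hc]
      field_simp
    have hlim : Tendsto (fun n : ℕ => σ n - (((n-1 : ℕ)):ℂ)/(n:ℂ) * σ (n-1)) atTop (nhds 0) := by
      have := hσ.sub (hfrac.mul hσ')
      simpa using this
    refine hlim.congr' ?_
    filter_upwards [eventually_ge_atTop 1] with n hn
    obtain ⟨m, rfl⟩ : ∃ m, n = m + 1 := ⟨n - 1, by omega⟩
    have hsucc : ∑ ℓ ∈ Icc 1 (m+1), T ℓ = (∑ ℓ ∈ Icc 1 m, T ℓ) + T (m+1) :=
      Finset.sum_Icc_succ_top (by omega) _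
    have hm1 : m + 1 - 1 = m := by omega
    simp only [hσdef, hm1, hsucc]
    have hn0 : ((m:ℂ)+1) ≠ 0 := by
      have : ((m+1 : ℕ):ℂ) ≠ 0 := Nat.cast_ne_zero.mpr (by omega)
      push_cast at this; exact this
    rcases Nat.eq_zero_or_pos m with rfl | hm
    · simp
    · have hm0 : (m:ℂ) ≠ 0 := Nat.cast_ne_zero.mpr (by omega)
      push_cast
      field_simp
      ring
  -- auxiliary tendsto for odd case
  have h2n1 : Tendsto (fun n : ℕ => 2*n+1) atTop atTop :=
    tendsto_atTop_atTop.mpr (fun b => ⟨b, fun n hn => by omega⟩)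
  have hA : Tendsto (fun n : ℕ => a (2*n+1) / ((2*n+1 : ℕ):ℂ)) atTop (nhds 0) :=
    (hsmall.comp h2n1).congr (fun n => by simp [Function.comp])
  have hinv21 : Tendsto (fun n : ℕ => 1/((2*n+1 : ℕ):ℂ)) atTop (nhds 0) :=
    (cinv_aux.comp h2n1).congr (fun n => by simp [Function.comp])
  have hfrac2 : Tendsto (fun n : ℕ => ((2*n : ℕ):ℂ)/((2*n+1 : ℕ):ℂ)) atTop (nhds 1) := by
    have h1 : Tendsto (fun n : ℕ => 1 - 1/((2*n+1 : ℕ):ℂ)) atTop (nhds 1) := by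
      simpa using (tendsto_const_nhds : Tendsto (fun _ : ℕ => (1:ℂ)) atTop _).sub hinv21
    refine h1.congr (fun n => ?_)
    have hn0 : ((2*n+1 : ℕ):ℂ) ≠ 0 := Nat.cast_ne_zero.mpr (by omega)
    push_cast at hn0 ⊢
    field_simp
    ring
  have hfrac3 : Tendsto (fun n : ℕ => (n:ℂ)/((2*n+1 : ℕ):ℂ)) atTop (nhds (1/2)) := by
    have := hfrac2.const_mul (1/2 : ℂ)
    rw [mul_one] at this
    refine this.congr (fun n => ?_)
    push_cast
    ring
  have hT2 : Tendsto (fun n : ℕ => T n / ((2*n+1 : ℕ):ℂ)) atTop (nhds 0) := by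
    have hlim := hTn.mul hfrac3
    rw [zero_mul] at hlim
    refine hlim.congr' ?_
    filter_upwards [eventually_ge_atTop 1] with n hn
    have hn0 : (n:ℂ) ≠ 0 := Nat.cast_ne_zero.mpr (by omega)
    have h210 : ((2*n+1 : ℕ):ℂ) ≠ 0 := Nat.cast_ne_zero.mpr (by omega)
    field_simp
  have hI : Tendsto (fun n : ℕ => (∑ k ∈ Icc 1 (2*n+1), a k) / ((2*n+1 : ℕ):ℂ))
      atTop (nhds 0) := by
    have hlim := hT2.add hA
    rw [add_zero] at hlim
    refine hlim.congr (fun n => ?_)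
    have hs : ∑ k ∈ Icc 1 (2*n+1), a k = T n + a (2*n+1) := by
      rw [hT]
      exact (Finset.sum_Icc_succ_top (by omega) _)
    rw [hs, add_div]
  -- Odd Cesàro means converge to S - L/2
  have hO : Tendsto (fun n : ℕ => (1/((2*n+1 : ℕ):ℂ)) * ∑ ℓ ∈ Icc 1 (2*n+1), ∑ k ∈ Icc 1 ℓ, a k)
      atTop (nhds (S - L/2)) := by
    have hlim := (hfrac2.mul hE).add hI
    rw [one_mul, add_zero] at hlim
    refine hlim.congr' ?_
    filter_upwards [eventually_ge_atTop 1] with n hn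
    have hs : ∑ ℓ ∈ Icc 1 (2*n+1), ∑ k ∈ Icc 1 ℓ, a k
        = (∑ ℓ ∈ Icc 1 (2*n), ∑ k ∈ Icc 1 ℓ, a k) + ∑ k ∈ Icc 1 (2*n+1), a k :=
      Finset.sum_Icc_succ_top (by omega) _
    have h2n0 : ((2*n : ℕ):ℂ) ≠ 0 := Nat.cast_ne_zero.mpr (by omega)
    have h210 : ((2*n+1 : ℕ):ℂ) ≠ 0 := Nat.cast_ne_zero.mpr (by omega)
    rw [hs, mul_add]
    have e1 : ((2*n : ℕ):ℂ)/((2*n+1 : ℕ):ℂ)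
          * ((1/((2*n : ℕ):ℂ)) * ∑ ℓ ∈ Icc 1 (2*n), ∑ k ∈ Icc 1 ℓ, a k)
        = (((2*n : ℕ):ℂ) * (((2*n : ℕ):ℂ))⁻¹)
          * ((1/((2*n+1 : ℕ):ℂ)) * ∑ ℓ ∈ Icc 1 (2*n), ∑ k ∈ Icc 1 ℓ, a k) := by
      ring
    rw [e1, mul_inv_cancel₀ h2n0, one_mul]
    ring
  exact evenodd_aux hE hO
end

section
/- Let (a_k)_{k≥1} be a sequence of complex numbers with a_k/k → 0 as k → ∞. Suppose that the sequence (a_{2k+1})_{k≥1} is Cesàro convergent to L′ ∈ ℂ and that the series ∑_{k≥1}(a_{2k} + a_{2k+1}) is Cesàro summable to S′ ∈ ℂ. Then the series ∑_{k≥1} a_k is Cesàro summable, and its Cesàro sum equals S′ + a_1 − L′/2. -/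
open Filter Finset

private lemma inv_nat_tendsto : Tendsto (fun n : ℕ => ((n : ℂ))⁻¹) atTop (nhds 0) := by
  have h : Tendsto (fun n : ℕ => 1 / (n : ℝ)) atTop (nhds 0) := tendsto_one_div_atTop_nhds_zero_nat
  have h2 := (Complex.continuous_ofReal.tendsto 0).comp h
  simpa [Function.comp_def, one_div, Complex.ofReal_inv, Complex.ofReal_natCast] using h2

private lemma comp_nat_tendsto (c d : ℕ) (hc : 1 ≤ c) :
    Tendsto (fun n : ℕ => c*n+d) atTop atTop :=
  tendsto_atTop_atTop.mpr (fun b => ⟨b, fun n hn => by nlinarith⟩)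

private lemma inv_lin_tendsto (c d : ℕ) (hc : 1 ≤ c) :
    Tendsto (fun n : ℕ => ((c:ℂ)*n+d)⁻¹) atTop (nhds 0) := by
  have h := inv_nat_tendsto.comp (comp_nat_tendsto c d hc)
  simp only [Function.comp_def] at h
  push_cast at h
  exact h

private lemma hne_lin (c d : ℕ) (hd : 1 ≤ d) : ∀ n : ℕ, (c:ℂ)*n+d ≠ 0 := by
  intro n
  have h : ((c*n+d : ℕ):ℂ) ≠ 0 := Nat.cast_ne_zero.mpr (by omega)
  push_cast at h; exact h

private lemma ratio1 : Tendsto (fun n : ℕ => (n:ℂ)/(2*(n:ℂ)+1)) atTop (nhds (1/2)) := by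
  have h := ((tendsto_const_nhds : Tendsto (fun _ : ℕ => (1/2:ℂ)) atTop (nhds (1/2)))).sub
    ((inv_lin_tendsto 2 1 (by norm_num)).const_mul (1/2 : ℂ))
  rw [mul_zero, sub_zero] at h
  refine h.congr fun n => ?_
  have h0 := hne_lin 2 1 (by norm_num) n
  push_cast at h0 ⊢
  field_simp [h0]
  ring

private lemma ratio2 : Tendsto (fun n : ℕ => (n:ℂ)/(2*(n:ℂ)+2)) atTop (nhds (1/2)) := by
  have h := ((tendsto_const_nhds : Tendsto (fun _ : ℕ => (1/2:ℂ)) atTop (nhds (1/2)))).sub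
    (inv_lin_tendsto 2 2 (by norm_num))
  rw [sub_zero] at h
  refine h.congr fun n => ?_
  have h0 := hne_lin 2 2 (by norm_num) n
  push_cast at h0 ⊢
  field_simp [h0]
  ring

private lemma ratio3 : Tendsto (fun n : ℕ => (n:ℂ)/((n:ℂ)+1)) atTop (nhds 1) := by
  have h := ((tendsto_const_nhds : Tendsto (fun _ : ℕ => (1:ℂ)) atTop (nhds 1))).sub
    (inv_lin_tendsto 1 1 (by norm_num))
  rw [sub_zero] at h
  refine h.congr fun n => ?_
  have h0 := hne_lin 1 1 (by norm_num) n
  push_cast at h0 ⊢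
  rw [one_mul] at h0
  field_simp [h0]
  ring

private lemma ratio4 : Tendsto (fun n : ℕ => (2*(n:ℂ)+3)/(2*(n:ℂ)+2)) atTop (nhds 1) := by
  have h := ((tendsto_const_nhds : Tendsto (fun _ : ℕ => (1:ℂ)) atTop (nhds 1))).add
    (inv_lin_tendsto 2 2 (by norm_num))
  rw [add_zero] at h
  refine h.congr fun n => ?_
  have h0 := hne_lin 2 2 (by norm_num) n
  push_cast at h0 ⊢
  field_simp [h0]
  ring

private lemma sum_odd (a : ℕ → ℂ) (n : ℕ) :
    ∑ k ∈ Icc 1 (2*n+1), a k = a 1 + ∑ k ∈ Icc 1 n, (a (2*k) + a (2*k+1)) := by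
  induction n with
  | zero => simp
  | succ n ih =>
    rw [show 2*(n+1)+1 = (2*n+2)+1 from by ring, Finset.sum_Icc_succ_top (by omega),
        show 2*n+2 = (2*n+1)+1 from rfl, Finset.sum_Icc_succ_top (by omega), ih]
    simp only [Finset.sum_Icc_succ_top (show (1:ℕ) ≤ n+1 by omega)]
    simp only [show 2*(n+1) = 2*n+2 from by ring, show 2*(n+1)+1 = 2*n+3 from by ring,
      show (2*n+1)+1 = 2*n+2 from by ring, show (2*n+2)+1 = 2*n+3 from by ring]
    ring

private lemma sum_even (a : ℕ → ℂ) (n : ℕ) :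
    ∑ k ∈ Icc 1 (2*n+2), a k
      = a 1 + (∑ k ∈ Icc 1 n, (a (2*k) + a (2*k+1))) + a (2*n+2) := by
  rw [show 2*n+2 = (2*n+1)+1 from rfl, Finset.sum_Icc_succ_top (by omega), sum_odd]

private lemma U_odd (a : ℕ → ℂ) (n : ℕ) :
    ∑ ℓ ∈ Icc 1 (2*n+1), ∑ k ∈ Icc 1 ℓ, a k
      = ((2*n+1 : ℕ) : ℂ) * a 1
        + 2 * (∑ ℓ ∈ Icc 1 n, ∑ k ∈ Icc 1 ℓ, (a (2*k) + a (2*k+1)))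
        - ∑ j ∈ Icc 1 n, a (2*j+1) := by
  induction n with
  | zero => simp
  | succ n ih =>
    rw [show 2*(n+1)+1 = (2*n+2)+1 from by ring, Finset.sum_Icc_succ_top (by omega),
        show 2*n+2 = (2*n+1)+1 from rfl, Finset.sum_Icc_succ_top (by omega), ih,
        show (2*n+1)+1 = 2*n+2 from rfl, sum_even,
        show (2*n+2)+1 = 2*(n+1)+1 from by ring, sum_odd]
    simp only [Finset.sum_Icc_succ_top (show (1:ℕ) ≤ n+1 by omega)]
    simp only [show 2*(n+1) = 2*n+2 from by ring, show 2*(n+1)+1 = 2*n+3 from by ring]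
    push_cast
    ring

private lemma U_even (a : ℕ → ℂ) (n : ℕ) :
    ∑ ℓ ∈ Icc 1 (2*n+2), ∑ k ∈ Icc 1 ℓ, a k
      = ((2*n+2 : ℕ) : ℂ) * a 1
        + 2 * (∑ ℓ ∈ Icc 1 n, ∑ k ∈ Icc 1 ℓ, (a (2*k) + a (2*k+1)))
        - ∑ j ∈ Icc 1 n, a (2*j+1)
        + (∑ k ∈ Icc 1 (n+1), (a (2*k) + a (2*k+1)))
        - a (2*n+3) := by
  rw [show 2*n+2 = (2*n+1)+1 from rfl, Finset.sum_Icc_succ_top (by omega), U_odd,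
      show (2*n+1)+1 = 2*n+2 from rfl, sum_even]
  simp only [Finset.sum_Icc_succ_top (show (1:ℕ) ≤ n+1 by omega)]
  simp only [show 2*(n+1) = 2*n+2 from by ring, show 2*(n+1)+1 = 2*n+3 from by ring]
  push_cast
  ring

private lemma even_alg (x PP QQ TT A B : ℂ) (hx : x ≠ 0) (h1 : x+1 ≠ 0)
    (h2 : 2*x+2 ≠ 0) (h3 : 2*x+3 ≠ 0) :
    B + x/(2*x+2) * (2*((1/x)*PP) - (1/x)*QQ)
      + 1/2 * ((1/(x+1)) * (PP + TT) - x/(x+1) * ((1/x)*PP))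
      - (2*x+3)/(2*x+2) * (A/(2*x+3))
    = 1/(2*x+2) * ((2*x+2)*B + 2*PP - QQ + TT - A) := by
  have e1 : x/(2*x+2) * (2*((1/x)*PP) - (1/x)*QQ) = (2*PP - QQ)/(2*x+2) := by
    field_simp
  have e2 : 1/2 * ((1/(x+1)) * (PP + TT) - x/(x+1) * ((1/x)*PP)) = TT/(2*x+2) := by
    rw [show (2*x+2) = 2*(x+1) by ring]
    field_simp
    ring
  have e3 : (2*x+3)/(2*x+2) * (A/(2*x+3)) = A/(2*x+2) := by
    rw [div_mul_div_comm, mul_comm (2*x+3), ← div_mul_div_comm, div_self h3, mul_one]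
  rw [e1, e2, e3]
  field_simp
  ring

private lemma tendsto_odd_even {f : ℕ → ℂ} {L : ℂ}
    (h1 : Tendsto (fun n => f (2*n+1)) atTop (nhds L))
    (h2 : Tendsto (fun n => f (2*n+2)) atTop (nhds L)) :
    Tendsto f atTop (nhds L) := by
  rw [tendsto_def] at h1 h2 ⊢
  intro s hs
  obtain ⟨N1, hN1⟩ := mem_atTop_sets.mp (h1 s hs)
  obtain ⟨N2, hN2⟩ := mem_atTop_sets.mp (h2 s hs)
  apply mem_atTop_sets.mpr
  refine ⟨2*(max N1 N2)+1, fun m hm => ?_⟩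
  rcases Nat.even_or_odd m with ⟨k, hk⟩ | ⟨k, hk⟩
  · have h3 : m = 2*(k-1)+2 := by omega
    rw [h3]; exact hN2 (k-1) (by omega)
  · have h3 : m = 2*k+1 := by omega
    rw [h3]; exact hN1 k (by omega)

/-- Lemma on Cesàro summation: if `a k / k → 0`, the odd-indexed subsequence
`(a (2k+1))_{k≥1}` is Cesàro convergent to `L'`, and the series
`∑_{k≥1} (a (2k) + a (2k+1))` is Cesàro summable to `S'`, then the series
`∑ a k` is Cesàro summable to `S' + a 1 - L'/2`. -/
theorem cesaro_pairwise_odd (a : ℕ → ℂ) (L' S' : ℂ)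
    (hsmall : Tendsto (fun k : ℕ => a k / (k : ℂ)) atTop (nhds 0))
    (hodd : Tendsto (fun k : ℕ => (1 / (k : ℂ)) * ∑ j ∈ Icc 1 k, a (2 * j + 1))
      atTop (nhds L'))
    (hpairs : Tendsto
      (fun m : ℕ => (1 / (m : ℂ)) * ∑ ℓ ∈ Icc 1 m, ∑ k ∈ Icc 1 ℓ, (a (2 * k) + a (2 * k + 1)))
      atTop (nhds S')) :
    Tendsto (fun m : ℕ => (1 / (m : ℂ)) * ∑ ℓ ∈ Icc 1 m, ∑ k ∈ Icc 1 ℓ, a k)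
      atTop (nhds (S' + a 1 - L' / 2)) := by
  -- the combined sequence g
  have hg : Tendsto (fun n : ℕ =>
      2 * ((1 / (n : ℂ)) * ∑ ℓ ∈ Icc 1 n, ∑ k ∈ Icc 1 ℓ, (a (2 * k) + a (2 * k + 1)))
        - (1 / (n : ℂ)) * ∑ j ∈ Icc 1 n, a (2 * j + 1)) atTop (nhds (2 * S' - L')) :=
    (hpairs.const_mul 2).sub hodd
  apply tendsto_odd_even
  · -- odd subsequence
    have key : S' + a 1 - L' / 2 = a 1 + (1/2 : ℂ) * (2 * S' - L') := by ring
    rw [key]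
    have hlim := (tendsto_const_nhds : Tendsto (fun _ : ℕ => a 1) atTop (nhds (a 1))).add
      (ratio1.mul hg)
    refine hlim.congr' ?_
    filter_upwards [eventually_ge_atTop 1] with n hn
    rw [U_odd]
    have hn0 : (n:ℂ) ≠ 0 := Nat.cast_ne_zero.mpr (by omega)
    have h1 := hne_lin 2 1 (by norm_num) n
    push_cast at h1 ⊢
    field_simp
    rw [add_div' _ _ _ (by rw [mul_comm]; exact h1)]
    ring
  · -- even subsequence
    have hPsucc : Tendsto (fun n : ℕ => (1 / ((n+1 : ℕ) : ℂ)) *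
        ∑ ℓ ∈ Icc 1 (n+1), ∑ k ∈ Icc 1 ℓ, (a (2 * k) + a (2 * k + 1))) atTop (nhds S') := by
      have h := hpairs.comp (tendsto_add_atTop_nat 1)
      simpa [Function.comp_def] using h
    have hPold : Tendsto (fun n : ℕ => ((n:ℂ)/((n:ℂ)+1)) *
        ((1 / (n : ℂ)) * ∑ ℓ ∈ Icc 1 n, ∑ k ∈ Icc 1 ℓ, (a (2 * k) + a (2 * k + 1))))
        atTop (nhds S') := by
      have h := ratio3.mul hpairs
      rwa [one_mul] at h
    have hd : Tendsto (fun n : ℕ => (1/2 : ℂ) *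
        ((1 / ((n+1 : ℕ) : ℂ)) * ∑ ℓ ∈ Icc 1 (n+1), ∑ k ∈ Icc 1 ℓ, (a (2 * k) + a (2 * k + 1))
          - ((n:ℂ)/((n:ℂ)+1)) *
            ((1 / (n : ℂ)) * ∑ ℓ ∈ Icc 1 n, ∑ k ∈ Icc 1 ℓ, (a (2 * k) + a (2 * k + 1)))))
        atTop (nhds 0) := by
      have h := (hPsucc.sub hPold).const_mul (1/2 : ℂ)
      rwa [sub_self, mul_zero] at h
    have hsmall' : Tendsto (fun n : ℕ => a (2*n+3) / ((2*n+3 : ℕ) : ℂ)) atTop (nhds 0) := by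
      have h := hsmall.comp (comp_nat_tendsto 2 3 (by norm_num))
      simpa [Function.comp_def] using h
    have he : Tendsto (fun n : ℕ =>
        ((2*(n:ℂ)+3)/(2*(n:ℂ)+2)) * (a (2*n+3) / ((2*n+3 : ℕ) : ℂ))) atTop (nhds 0) := by
      have h := ratio4.mul hsmall'
      rwa [one_mul] at h
    have key : S' + a 1 - L' / 2 = a 1 + (1/2 : ℂ) * (2 * S' - L') + 0 - 0 := by ring
    rw [key]
    have hlim := (((tendsto_const_nhds : Tendsto (fun _ : ℕ => a 1) atTop (nhds (a 1))).add
      (ratio2.mul hg)).add hd).sub he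
    refine hlim.congr' ?_
    filter_upwards [eventually_ge_atTop 1] with n hn
    rw [U_even, Finset.sum_Icc_succ_top (show (1:ℕ) ≤ n+1 by omega),
        Finset.sum_Icc_succ_top (show (1:ℕ) ≤ n+1 by omega)]
    simp only [show 2*(n+1) = 2*n+2 from by ring, show 2*(n+1)+1 = 2*n+3 from by ring,
      show 2*n+2+1 = 2*n+3 from by ring]
    have hn0 : (n:ℂ) ≠ 0 := Nat.cast_ne_zero.mpr (by omega)
    have h1 := hne_lin 1 1 (by norm_num) n
    have h2 := hne_lin 2 2 (by norm_num) n
    have h3 := hne_lin 2 3 (by norm_num) n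
    push_cast at h1 h2 h3 ⊢
    rw [one_mul] at h1
    exact even_alg _ _ _ _ _ _ hn0 h1 h2 h3
end

section
/- Assume a_1 ≠ 0, 𝔄 ≠ 0, a_0² ≠ b_0², and let α ∈ ℂ satisfy sin α ≠ 0 and 𝔄·cos α + ℭ = 0. Then W_1(1/2, α) = 0; equivalently, 2·R_1(1/2,α)·sin²α + R_2(1/2,α)·cos α = 0. -/
open Complex

/-- `𝔄 = b₁a₀ + a₁b₀`. -/
noncomputable def frakA (a0 b0 a1 b1 : ℂ) : ℂ := b1 * a0 + a1 * b0

/-- `𝔅 = f₁a₀ − c₁b₀`. -/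
noncomputable def frakB (a0 b0 c1 f1 : ℂ) : ℂ := f1 * a0 - c1 * b0

/-- `ℭ = a₁a₀ + b₁b₀`. -/
noncomputable def frakC (a0 b0 a1 b1 : ℂ) : ℂ := a1 * a0 + b1 * b0

/-- The polynomial `𝓡₁(x, α)`. -/
noncomputable def calR1 (a0 b0 a1 b1 : ℂ) (x α : ℂ) : ℂ :=
  a0 * b0 * (3 * frakA a0 b0 a1 b1 * b0 + a1 * (a0 ^ 2 - b0 ^ 2) * (1 + 2 * x))
  + 2 * (a0 ^ 2 + b0 ^ 2) * (frakA a0 b0 a1 b1 * b0 + a1 * (a0 ^ 2 - b0 ^ 2) * x) * cos α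
  + a0 * b0 * (frakA a0 b0 a1 b1 * b0 + a1 * (a0 ^ 2 - b0 ^ 2) * (2 * x - 1)) * cos (2 * α)

/-- The polynomial `𝓡₂(x, α)`. -/
noncomputable def calR2 (a0 b0 a1 b1 : ℂ) (x α : ℂ) : ℂ :=
  4 * frakA a0 b0 a1 b1 * a0 ^ 2 * b0 + 2 * a1 * (a0 ^ 4 - b0 ^ 4) * (1 - x)
  + a0 * (frakA a0 b0 a1 b1 * (2 * a0 ^ 2 + 5 * b0 ^ 2)
      + a1 * b0 * (a0 ^ 2 - b0 ^ 2) * (5 - 2 * x)) * cos α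
  + 2 * (a0 ^ 2 + b0 ^ 2) * (frakA a0 b0 a1 b1 * b0 + a1 * (a0 ^ 2 - b0 ^ 2) * x) * cos (2 * α)
  + a0 * b0 * (frakA a0 b0 a1 b1 * b0 + a1 * (a0 ^ 2 - b0 ^ 2) * (2 * x - 1)) * cos (3 * α)

/-- The function `V₀(x, α)`. -/
noncomputable def V0 (a0 b0 : ℂ) (x α : ℂ) : ℂ :=
  sin (α * (2 * x - 1)) * (a0 ^ 2 + b0 ^ 2 + 2 * a0 * b0 * cos α)
    / ((a0 ^ 2 - b0 ^ 2) * sin α)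

/-- The function `V₁(x, α)`. -/
noncomputable def V1 (a0 b0 : ℂ) (x α : ℂ) : ℂ :=
  cos (α * (2 * x - 1)) * (a0 ^ 2 + b0 ^ 2 + 2 * a0 * b0 * cos α)
    / ((a0 ^ 2 - b0 ^ 2) * sin α)

/-- The function `W₀(x, α)`. -/
noncomputable def W0 (a0 b0 a1 b1 c1 f1 : ℂ) (x α : ℂ) : ℂ :=
  frakB a0 b0 c1 f1 *
    (2 * calR1 a0 b0 a1 b1 x α * sin α * cos (2 * α * x)
      - calR2 a0 b0 a1 b1 x α * sin (2 * α * x))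
  / (4 * frakA a0 b0 a1 b1 * a1 * (a0 ^ 2 - b0 ^ 2) ^ 2 * (Real.pi : ℂ) * sin α ^ 2)

/-- The function `W₁(x, α)`. -/
noncomputable def W1 (a0 b0 a1 b1 c1 f1 : ℂ) (x α : ℂ) : ℂ :=
  -(frakB a0 b0 c1 f1 *
    (2 * calR1 a0 b0 a1 b1 x α * sin α * sin (2 * α * x)
      + calR2 a0 b0 a1 b1 x α * cos (2 * α * x))
  / (4 * frakA a0 b0 a1 b1 * a1 * (a0 ^ 2 - b0 ^ 2) ^ 2 * (Real.pi : ℂ) * sin α ^ 2))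

/-- Part of formula (VW): under `𝔄 cos α + ℭ = 0` one has `W₁(1/2, α) = 0`;
equivalently, `2𝓡₁(1/2,α) sin²α + 𝓡₂(1/2,α) cos α = 0`. -/
theorem W1_half_eq_zero (a0 b0 a1 b1 c1 f1 α : ℂ)
    (ha1 : a1 ≠ 0) (hA : frakA a0 b0 a1 b1 ≠ 0) (hab : a0 ^ 2 ≠ b0 ^ 2)
    (hsin : sin α ≠ 0)
    (hα : frakA a0 b0 a1 b1 * cos α + frakC a0 b0 a1 b1 = 0) :
    W1 a0 b0 a1 b1 c1 f1 (1 / 2) α = 0 ∧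
    2 * calR1 a0 b0 a1 b1 (1 / 2) α * sin α ^ 2
      + calR2 a0 b0 a1 b1 (1 / 2) α * cos α = 0 := by
  have key : 2 * calR1 a0 b0 a1 b1 (1 / 2) α * sin α ^ 2
      + calR2 a0 b0 a1 b1 (1 / 2) α * cos α = 0 := by
    simp only [calR1, calR2, frakA, frakC] at *
    rw [Complex.cos_two_mul, Complex.cos_three_mul, Complex.sin_sq]
    linear_combination (2 * a0 * (a0 ^ 2 + b0 ^ 2) * Complex.cos α + 4 * a0 ^ 2 * b0) * hα
  refine ⟨?_, key⟩
  have hx : 2 * α * (1 / 2) = α := by ring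
  have hnum : frakB a0 b0 c1 f1 *
      (2 * calR1 a0 b0 a1 b1 (1 / 2) α * sin α * sin α
        + calR2 a0 b0 a1 b1 (1 / 2) α * cos α) = 0 := by
    have : frakB a0 b0 c1 f1 *
        (2 * calR1 a0 b0 a1 b1 (1 / 2) α * sin α * sin α
          + calR2 a0 b0 a1 b1 (1 / 2) α * cos α)
        = frakB a0 b0 c1 f1 *
          (2 * calR1 a0 b0 a1 b1 (1 / 2) α * sin α ^ 2
            + calR2 a0 b0 a1 b1 (1 / 2) α * cos α) := by ring
    rw [this, key, mul_zero]
  rw [W1, hx, hnum, zero_div, neg_zero]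
end

section
/- Assume 𝔄 ≠ 0 and let α ∈ ℂ satisfy 𝔄·cos α + ℭ = 0. Then for every x ∈ ℂ the following identity holds: 2·R_1(x,α)·sin α·sin(2αx) + R_2(x,α)·cos(2αx) = 2·sin(α(x − 1/2)) · [ (a_0a_1b_0(a_0²−b_0²)(2x−1) + a_0b_0²𝔄)·sin(α(5/2 − x)) + (2a_1(a_0⁴−b_0⁴)x + 2b_0(a_0²+b_0²)𝔄)·sin(α(3/2 − x)) − (5a_0³a_1b_0 + a_0a_1b_0³ + a_0⁴b_1 + 5a_0²b_0²b_1)·sin(α(x − 1/2)) − (2a_1(a_0⁴−b_0⁴)(1−x) + 4a_0²b_0𝔄)·sin(α(1/2 + x)) + (a_0a_1b_0(a_0²−b_0²)(2x−1) − a_0³𝔄)·sin(α(3/2 + x)) ]. -/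
open Complex

/-- The factorization identity used in the proof of the last relation in (VW):
under `𝔄 cos α + ℭ = 0`, the numerator of `W₁` factors with
`sin (α(x - 1/2))`. -/
theorem W1_numerator_factorization (a0 b0 a1 b1 α : ℂ)
    (hA : frakA a0 b0 a1 b1 ≠ 0)
    (hα : frakA a0 b0 a1 b1 * cos α + frakC a0 b0 a1 b1 = 0) :
    ∀ x : ℂ,
      2 * calR1 a0 b0 a1 b1 x α * sin α * sin (2 * α * x)
        + calR2 a0 b0 a1 b1 x α * cos (2 * α * x)
      = 2 * sin (α * (x - 1 / 2)) *
        ( (a0 * a1 * b0 * (a0 ^ 2 - b0 ^ 2) * (2 * x - 1)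
            + a0 * b0 ^ 2 * frakA a0 b0 a1 b1) * sin (α * (5 / 2 - x))
        + (2 * a1 * (a0 ^ 4 - b0 ^ 4) * x
            + 2 * b0 * (a0 ^ 2 + b0 ^ 2) * frakA a0 b0 a1 b1) * sin (α * (3 / 2 - x))
        - (5 * a0 ^ 3 * a1 * b0 + a0 * a1 * b0 ^ 3 + a0 ^ 4 * b1
            + 5 * a0 ^ 2 * b0 ^ 2 * b1) * sin (α * (x - 1 / 2))
        - (2 * a1 * (a0 ^ 4 - b0 ^ 4) * (1 - x)
            + 4 * a0 ^ 2 * b0 * frakA a0 b0 a1 b1) * sin (α * (1 / 2 + x))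
        + (a0 * a1 * b0 * (a0 ^ 2 - b0 ^ 2) * (2 * x - 1)
            - a0 ^ 3 * frakA a0 b0 a1 b1) * sin (α * (3 / 2 + x)) ) := by
  intro x
  have key : ∀ (p q : ℂ) (m n : ℕ) (z : ℂ), z = m * p + n * q →
      Complex.exp z = Complex.exp p ^ m * Complex.exp q ^ n := by
    intro p q m n z hz
    rw [hz, Complex.exp_add, Complex.exp_nat_mul, Complex.exp_nat_mul]
  have hWW : Complex.exp (α / 2 * I) * Complex.exp (-(α / 2 * I)) = 1 := by
    rw [← Complex.exp_add]; simp
  have hVV : Complex.exp (α * x * I) * Complex.exp (-(α * x * I)) = 1 := by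
    rw [← Complex.exp_add]; simp
  have hI : Complex.I ^ 2 = -1 := Complex.I_sq
  simp only [frakA, frakC] at hα ⊢
  simp only [calR1, calR2, frakA, Complex.sin, Complex.cos] at *
  rw [key (α/2*I) (α*x*I) 2 0 (α * I) (by push_cast; ring),
      key (-(α/2*I)) (α*x*I) 2 0 (-α * I) (by push_cast; ring)] at hα
  rw [key (α/2*I) (α*x*I) 2 0 (α * I) (by push_cast; ring),
      key (-(α/2*I)) (α*x*I) 2 0 (-α * I) (by push_cast; ring),
      key (α/2*I) (α*x*I) 4 0 (2 * α * I) (by push_cast; ring),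
      key (-(α/2*I)) (α*x*I) 4 0 (-(2 * α) * I) (by push_cast; ring),
      key (α/2*I) (α*x*I) 6 0 (3 * α * I) (by push_cast; ring),
      key (-(α/2*I)) (α*x*I) 6 0 (-(3 * α) * I) (by push_cast; ring),
      key (α/2*I) (α*x*I) 0 2 (2 * α * x * I) (by push_cast; ring),
      key (α/2*I) (-(α*x*I)) 0 2 (-(2 * α * x) * I) (by push_cast; ring),
      key (-(α/2*I)) (α*x*I) 1 1 (α * (x - 1 / 2) * I) (by push_cast; ring),
      key (α/2*I) (-(α*x*I)) 1 1 (-(α * (x - 1 / 2)) * I) (by push_cast; ring),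
      key (α/2*I) (-(α*x*I)) 5 1 (α * (5 / 2 - x) * I) (by push_cast; ring),
      key (-(α/2*I)) (α*x*I) 5 1 (-(α * (5 / 2 - x)) * I) (by push_cast; ring),
      key (α/2*I) (-(α*x*I)) 3 1 (α * (3 / 2 - x) * I) (by push_cast; ring),
      key (-(α/2*I)) (α*x*I) 3 1 (-(α * (3 / 2 - x)) * I) (by push_cast; ring),
      key (α/2*I) (α*x*I) 1 1 (α * (1 / 2 + x) * I) (by push_cast; ring),
      key (-(α/2*I)) (-(α*x*I)) 1 1 (-(α * (1 / 2 + x)) * I) (by push_cast; ring),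
      key (α/2*I) (α*x*I) 3 1 (α * (3 / 2 + x) * I) (by push_cast; ring),
      key (-(α/2*I)) (-(α*x*I)) 3 1 (-(α * (3 / 2 + x)) * I) (by push_cast; ring)]
  set w := Complex.exp (α / 2 * I) with hw
  set W := Complex.exp (-(α / 2 * I)) with hW
  set v := Complex.exp (α * x * I) with hv
  set V := Complex.exp (-(α * x * I)) with hV
  linear_combination (norm := ring)
    ((a0*b0^2*W^2 + a0*b0^2*w^2 + 4*a0^2*b0 + a0^3*W^2 + a0^3*w^2)) * hα
  + ((b0^4*a1*V^2 + b0^4*a1*v*W^2*V + b0^4*a1*v^2 + b0^4*a1*w^2*v*V + (-1)*b0^4*a1*x*V^2 + (-1)*b0^4*a1*x*v*W^2*V + (-1)*b0^4*a1*x*v^2 + (-1)*b0^4*a1*x*w^2*v*V + a0*b0^3*b1*v*W^2*V + a0*b0^3*b1*w^2*v*V + (-1)*a0*b0^3*a1 + a0*b0^3*a1*W^2*V^2 + a0*b0^3*a1*v*V + a0*b0^3*a1*v*W^4*V + (-1/2)*a0*b0^3*a1*v^2*W^2 + (-1)*a0*b0^3*a1*w*W + (1/2)*a0*b0^3*a1*w*W^3*V^2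 + (-1/2)*a0*b0^3*a1*w*v^2*W^3 + (-1/2)*a0*b0^3*a1*w^2*V^2 + a0*b0^3*a1*w^2*v^2 + (-1/2)*a0*b0^3*a1*w^3*W*V^2 + (1/2)*a0*b0^3*a1*w^3*v^2*W + a0*b0^3*a1*w^4*v*V + (-3/2)*a0*b0^3*a1*x*W^2*V^2 + (-1)*a0*b0^3*a1*x*v*W^4*V + (1/2)*a0*b0^3*a1*x*v^2*W^2 + (-1/2)*a0*b0^3*a1*x*w*W^3*V^2 + (1/2)*a0*b0^3*a1*x*w*v^2*W^3 + (1/2)*a0*b0^3*a1*x*w^2*V^2 + (-3/2)*a0*b0^3*a1*x*w^2*v^2 + (1/2)*a0*b0^3*a1*x*w^3*W*V^2 + (-1/2)*a0*b0^3*a1*x*w^3*v^2*W + (-1)*a0*b0^3*a1*x*w^4*v*V + (-1)*a0^2*b0^2*b1 + (1/4)*a0^2*b0^2*b1*W^2*V^2 + 5*a0^2*b0^2*b1*v*V + (1/2)*a0^2*b0^2*b1*v*W^4*V + (-1/4)*a0^2*b0^2*b1*v^2*W^2 + (-1)*a0^2*b0^2*b1*w*W + (1/4)*a0^2*b0^2*b1*w*W^3*V^2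 + (-1/4)*a0^2*b0^2*b1*w*v^2*W^3 + (-1/4)*a0^2*b0^2*b1*w^2*V^2 + (1/4)*a0^2*b0^2*b1*w^2*v^2 + (-1/4)*a0^2*b0^2*b1*w^3*W*V^2 + (1/4)*a0^2*b0^2*b1*w^3*v^2*W + (1/2)*a0^2*b0^2*b1*w^4*v*V + (-2)*a0^2*b0^2*a1*V^2 + a0^2*b0^2*a1*v*W^2*V + (-2)*a0^2*b0^2*a1*v^2 + a0^2*b0^2*a1*w^2*v*V + (-2)*a0^3*b0*b1*V^2 + a0^3*b0*b1*v*W^2*V + (-2)*a0^3*b0*b1*v^2 + a0^3*b0*b1*w^2*v*V + (-1)*a0^3*b0*a1 + (-5/4)*a0^3*b0*a1*W^2*V^2 + 5*a0^3*b0*a1*v*V + (-1/2)*a0^3*b0*a1*v*W^4*V + (1/4)*a0^3*b0*a1*v^2*W^2 + (-1)*a0^3*b0*a1*w*W + (-1/4)*a0^3*b0*a1*w*W^3*V^2 + (1/4)*a0^3*b0*a1*w*v^2*W^3 + (1/4)*a0^3*b0*a1*w^2*V^2 + (-5/4)*a0^3*b0*a1*w^2*v^2 + (1/4)*a0^3*b0*a1*w^3*W*V^2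 + (-1/4)*a0^3*b0*a1*w^3*v^2*W + (-1/2)*a0^3*b0*a1*w^4*v*V + (3/2)*a0^3*b0*a1*x*W^2*V^2 + a0^3*b0*a1*x*v*W^4*V + (-1/2)*a0^3*b0*a1*x*v^2*W^2 + (1/2)*a0^3*b0*a1*x*w*W^3*V^2 + (-1/2)*a0^3*b0*a1*x*w*v^2*W^3 + (-1/2)*a0^3*b0*a1*x*w^2*V^2 + (3/2)*a0^3*b0*a1*x*w^2*v^2 + (-1/2)*a0^3*b0*a1*x*w^3*W*V^2 + (1/2)*a0^3*b0*a1*x*w^3*v^2*W + a0^3*b0*a1*x*w^4*v*V + (-1)*a0^4*b1 + (-1/2)*a0^4*b1*W^2*V^2 + a0^4*b1*v*V + (-1)*a0^4*b1*w*W + (-1/2)*a0^4*b1*w^2*v^2 + (-1)*a0^4*a1*V^2 + (-1)*a0^4*a1*v^2 + a0^4*a1*x*V^2 + a0^4*a1*x*v*W^2*V + a0^4*a1*x*v^2 + a0^4*a1*x*w^2*v*V)) * hWW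
  + ((a0*b0^3*b1*W^2 + a0*b0^3*b1*w^2 + a0*b0^3*a1 + (1/2)*a0*b0^3*a1*W^4 + (1/2)*a0*b0^3*a1*w^4 + 5*a0^2*b0^2*b1 + (1/2)*a0^2*b0^2*b1*W^4 + (1/2)*a0^2*b0^2*b1*w^4 + 3*a0^2*b0^2*a1*W^2 + 3*a0^2*b0^2*a1*w^2 + 3*a0^3*b0*b1*W^2 + 3*a0^3*b0*b1*w^2 + 5*a0^3*b0*a1 + (1/2)*a0^3*b0*a1*W^4 + (1/2)*a0^3*b0*a1*w^4 + a0^4*b1 + (1/2)*a0^4*b1*W^4 + (1/2)*a0^4*b1*w^4 + a0^4*a1*W^2 + a0^4*a1*w^2)) * hVV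
  + (((1/2)*b0^4*a1*W^4*V^2 + b0^4*a1*v*W^2*V + (1/2)*b0^4*a1*v^2*W^4 + (-1)*b0^4*a1*w*W*V^2 + (-1)*b0^4*a1*w*v*W^3*V + (-1)*b0^4*a1*w*v^2*W + b0^4*a1*w^2*v*V + (-1)*b0^4*a1*w^3*v*W*V + (1/2)*b0^4*a1*w^4*V^2 + (1/2)*b0^4*a1*w^4*v^2 + (-1/2)*b0^4*a1*x*W^4*V^2 + (-1)*b0^4*a1*x*v*W^2*V + (-1/2)*b0^4*a1*x*v^2*W^4 + b0^4*a1*x*w*W*V^2 + b0^4*a1*x*w*v*W^3*V + b0^4*a1*x*w*v^2*W + (-1)*b0^4*a1*x*w^2*v*V + b0^4*a1*x*w^3*v*W*V + (-1/2)*b0^4*a1*x*w^4*V^2 + (-1/2)*b0^4*a1*x*w^4*v^2 + (1/2)*a0*b0^3*b1*W^4*V^2 + (1/2)*a0*b0^3*b1*v^2*W^4 + (-1)*a0*b0^3*b1*w*v*W^3*V + (-1)*a0*b0^3*b1*w^3*v*W*V + (1/2)*a0*b0^3*b1*w^4*V^2 + (1/2)*a0*b0^3*b1*w^4*v^2 +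 a0*b0^3*a1*W^2*V^2 + (1/2)*a0*b0^3*a1*W^6*V^2 + (1/2)*a0*b0^3*a1*v*W^4*V + (-1/2)*a0*b0^3*a1*v^2*W^2 + (1/2)*a0*b0^3*a1*v^2*W^6 + (-1/2)*a0*b0^3*a1*w*W^3*V^2 + (-1)*a0*b0^3*a1*w*v*W*V + (-1)*a0*b0^3*a1*w*v*W^5*V + (-1/2)*a0*b0^3*a1*w^2*V^2 + (-1/2)*a0*b0^3*a1*w^2*W^4*V^2 + a0*b0^3*a1*w^2*v^2 + (1/2)*a0*b0^3*a1*w^2*v^2*W^4 + (-1/2)*a0*b0^3*a1*w^3*v^2*W + (1/2)*a0*b0^3*a1*w^4*W^2*V^2 + (1/2)*a0*b0^3*a1*w^4*v*V + (-1/2)*a0*b0^3*a1*w^4*v^2*W^2 + (-1)*a0*b0^3*a1*w^5*v*W*V + (1/2)*a0*b0^3*a1*w^6*V^2 + (1/2)*a0*b0^3*a1*w^6*v^2 + (-1)*a0*b0^3*a1*x*W^2*V^2 + (-1/2)*a0*b0^3*a1*x*W^6*V^2 + (-1)*a0*b0^3*a1*x*v*W^4*V + a0*b0^3*a1*x*v^2*W^2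 + (-1/2)*a0*b0^3*a1*x*v^2*W^6 + a0*b0^3*a1*x*w*W^3*V^2 + a0*b0^3*a1*x*w*v*W^5*V + a0*b0^3*a1*x*w^2*V^2 + (1/2)*a0*b0^3*a1*x*w^2*W^4*V^2 + (-1)*a0*b0^3*a1*x*w^2*v^2 + (-1/2)*a0*b0^3*a1*x*w^2*v^2*W^4 + a0*b0^3*a1*x*w^3*v^2*W + (-1/2)*a0*b0^3*a1*x*w^4*W^2*V^2 + (-1)*a0*b0^3*a1*x*w^4*v*V + (1/2)*a0*b0^3*a1*x*w^4*v^2*W^2 + a0*b0^3*a1*x*w^5*v*W*V + (-1/2)*a0*b0^3*a1*x*w^6*V^2 + (-1/2)*a0*b0^3*a1*x*w^6*v^2 + (3/2)*a0^2*b0^2*b1*W^2*V^2 + (1/4)*a0^2*b0^2*b1*W^6*V^2 + a0^2*b0^2*b1*v^2*W^2 + (1/4)*a0^2*b0^2*b1*v^2*W^6 + (-5)*a0^2*b0^2*b1*w*v*W*V + (-1/2)*a0^2*b0^2*b1*w*v*W^5*V + a0^2*b0^2*b1*w^2*V^2 + (-1/4)*a0^2*b0^2*b1*w^2*W^4*V^2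 + (3/2)*a0^2*b0^2*b1*w^2*v^2 + (1/4)*a0^2*b0^2*b1*w^2*v^2*W^4 + (1/4)*a0^2*b0^2*b1*w^4*W^2*V^2 + (-1/4)*a0^2*b0^2*b1*w^4*v^2*W^2 + (-1/2)*a0^2*b0^2*b1*w^5*v*W*V + (1/4)*a0^2*b0^2*b1*w^6*V^2 + (1/4)*a0^2*b0^2*b1*w^6*v^2 + (1/2)*a0^2*b0^2*a1*W^4*V^2 + (-2)*a0^2*b0^2*a1*v*W^2*V + (1/2)*a0^2*b0^2*a1*v^2*W^4 + 2*a0^2*b0^2*a1*w*W*V^2 + (-1)*a0^2*b0^2*a1*w*v*W^3*V + 2*a0^2*b0^2*a1*w*v^2*W + (-2)*a0^2*b0^2*a1*w^2*v*V + (-1)*a0^2*b0^2*a1*w^3*v*W*V + (1/2)*a0^2*b0^2*a1*w^4*V^2 + (1/2)*a0^2*b0^2*a1*w^4*v^2 + (1/2)*a0^3*b0*b1*W^4*V^2 + (-2)*a0^3*b0*b1*v*W^2*V + (1/2)*a0^3*b0*b1*v^2*W^4 + 2*a0^3*b0*b1*w*W*V^2 + (-1)*a0^3*b0*b1*w*v*W^3*V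 + 2*a0^3*b0*b1*w*v^2*W + (-2)*a0^3*b0*b1*w^2*v*V + (-1)*a0^3*b0*b1*w^3*v*W*V + (1/2)*a0^3*b0*b1*w^4*V^2 + (1/2)*a0^3*b0*b1*w^4*v^2 + (1/2)*a0^3*b0*a1*W^2*V^2 + (-1/4)*a0^3*b0*a1*W^6*V^2 + (-1)*a0^3*b0*a1*v*W^4*V + 2*a0^3*b0*a1*v^2*W^2 + (-1/4)*a0^3*b0*a1*v^2*W^6 + a0^3*b0*a1*w*W^3*V^2 + (-5)*a0^3*b0*a1*w*v*W*V + (1/2)*a0^3*b0*a1*w*v*W^5*V + 2*a0^3*b0*a1*w^2*V^2 + (1/4)*a0^3*b0*a1*w^2*W^4*V^2 + (1/2)*a0^3*b0*a1*w^2*v^2 + (-1/4)*a0^3*b0*a1*w^2*v^2*W^4 + a0^3*b0*a1*w^3*v^2*W + (-1/4)*a0^3*b0*a1*w^4*W^2*V^2 + (-1)*a0^3*b0*a1*w^4*v*V + (1/4)*a0^3*b0*a1*w^4*v^2*W^2 + (1/2)*a0^3*b0*a1*w^5*v*W*V + (-1/4)*a0^3*b0*a1*w^6*V^2 + (-1/4)*a0^3*b0*a1*w^6*v^2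 + a0^3*b0*a1*x*W^2*V^2 + (1/2)*a0^3*b0*a1*x*W^6*V^2 + a0^3*b0*a1*x*v*W^4*V + (-1)*a0^3*b0*a1*x*v^2*W^2 + (1/2)*a0^3*b0*a1*x*v^2*W^6 + (-1)*a0^3*b0*a1*x*w*W^3*V^2 + (-1)*a0^3*b0*a1*x*w*v*W^5*V + (-1)*a0^3*b0*a1*x*w^2*V^2 + (-1/2)*a0^3*b0*a1*x*w^2*W^4*V^2 + a0^3*b0*a1*x*w^2*v^2 + (1/2)*a0^3*b0*a1*x*w^2*v^2*W^4 + (-1)*a0^3*b0*a1*x*w^3*v^2*W + (1/2)*a0^3*b0*a1*x*w^4*W^2*V^2 + a0^3*b0*a1*x*w^4*v*V + (-1/2)*a0^3*b0*a1*x*w^4*v^2*W^2 + (-1)*a0^3*b0*a1*x*w^5*v*W*V + (1/2)*a0^3*b0*a1*x*w^6*V^2 + (1/2)*a0^3*b0*a1*x*w^6*v^2 + (-1/2)*a0^4*b1*v*W^4*V + (1/2)*a0^4*b1*v^2*W^2 + (1/2)*a0^4*b1*w*W^3*V^2 + (-1)*a0^4*b1*w*v*W*V + (1/2)*a0^4*b1*w^2*V^2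 + (1/2)*a0^4*b1*w^3*v^2*W + (-1/2)*a0^4*b1*w^4*v*V + (-1)*a0^4*a1*v*W^2*V + a0^4*a1*w*W*V^2 + a0^4*a1*w*v^2*W + (-1)*a0^4*a1*w^2*v*V + (1/2)*a0^4*a1*x*W^4*V^2 + a0^4*a1*x*v*W^2*V + (1/2)*a0^4*a1*x*v^2*W^4 + (-1)*a0^4*a1*x*w*W*V^2 + (-1)*a0^4*a1*x*w*v*W^3*V + (-1)*a0^4*a1*x*w*v^2*W + a0^4*a1*x*w^2*v*V + (-1)*a0^4*a1*x*w^3*v*W*V + (1/2)*a0^4*a1*x*w^4*V^2 + (1/2)*a0^4*a1*x*w^4*v^2)) * hI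
end

section
/- Let c_1 ∈ ℂ. Then there exist a constant C > 0, an integer N₀ ≥ 1, and complex numbers ρ_N for N ≥ N₀ such that: (i) for every N ≥ N₀ the boundary value problem −y″ = ρ_N²·y on [0,1], y(0) = y(1), y′(0) − y′(1) + c_1·y(0) = 0 has a twice continuously differentiable solution y not identically zero on [0,1]; and (ii) for every N ≥ N₀, | ρ_N − 2πN + c_1/(2πN) − (c_1³ − 12c_1²)/(96π³N³) | ≤ C/N⁵. -/
open Complex NNReal


lemma sin_taylor5 (t : ℂ) (ht : ‖t‖ ≤ 1) :
    ‖Complex.sin t - (t - t^3/6)‖ ≤ ‖t‖ ^ 5 / 100 := by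
  have hx1 : ‖t * Complex.I‖ ≤ 1 := by simpa using ht
  have hx2 : ‖-t * Complex.I‖ ≤ 1 := by simpa using ht
  have h1 : ‖Complex.exp (t*Complex.I)
      - ∑ m ∈ Finset.range 5, (t*Complex.I)^m / m.factorial‖ ≤ ‖t‖ ^ 5 / 100 := by
    have := Complex.exp_bound hx1 (n := 5) (by norm_num)
    have habs : ‖t * Complex.I‖ = ‖t‖ := by simp
    rw [habs] at this
    exact this.trans (le_of_eq (by norm_num [Nat.factorial]; all_goals ring))
  have h2 : ‖Complex.exp (-t*Complex.I)
      - ∑ m ∈ Finset.range 5, (-t*Complex.I)^m / m.factorial‖ ≤ ‖t‖ ^ 5 / 100 := by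
    have := Complex.exp_bound hx2 (n := 5) (by norm_num)
    have habs : ‖-t * Complex.I‖ = ‖t‖ := by simp
    rw [habs] at this
    exact this.trans (le_of_eq (by norm_num [Nat.factorial]; all_goals ring))
  have hid : Complex.sin t - (t - t^3/6)
      = ((Complex.exp (-t*Complex.I) - ∑ m ∈ Finset.range 5, (-t*Complex.I)^m / m.factorial)
        - (Complex.exp (t*Complex.I) - ∑ m ∈ Finset.range 5, (t*Complex.I)^m / m.factorial))
          * Complex.I / 2 := by
    simp only [Complex.sin, Finset.sum_range_succ, Finset.sum_range_zero, Nat.factorial]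
    push_cast
    linear_combination (-t - t^3/6*(Complex.I^2 - 1)) * Complex.I_sq
  rw [hid, norm_div, norm_mul, Complex.norm_I, mul_one, Complex.norm_two]
  have := (norm_sub_le (Complex.exp (-t*Complex.I)
      - ∑ m ∈ Finset.range 5, (-t*Complex.I)^m / m.factorial)
    (Complex.exp (t*Complex.I) - ∑ m ∈ Finset.range 5, (t*Complex.I)^m / m.factorial))
  linarith

lemma cos_taylor4 (t : ℂ) (ht : ‖t‖ ≤ 1) :
    ‖Complex.cos t - (1 - t^2/2)‖ ≤ ‖t‖ ^ 4 / 19 := by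
  have hx1 : ‖t * Complex.I‖ ≤ 1 := by simpa using ht
  have hx2 : ‖-t * Complex.I‖ ≤ 1 := by simpa using ht
  have h1 : ‖Complex.exp (t*Complex.I)
      - ∑ m ∈ Finset.range 4, (t*Complex.I)^m / m.factorial‖ ≤ ‖t‖ ^ 4 * (5/96) := by
    have := Complex.exp_bound hx1 (n := 4) (by norm_num)
    have habs : ‖t * Complex.I‖ = ‖t‖ := by simp
    rw [habs] at this
    exact this.trans (le_of_eq (by norm_num [Nat.factorial]; all_goals ring))
  have h2 : ‖Complex.exp (-t*Complex.I)
      - ∑ m ∈ Finset.range 4, (-t*Complex.I)^m / m.factorial‖ ≤ ‖t‖ ^ 4 * (5/96) := by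
    have := Complex.exp_bound hx2 (n := 4) (by norm_num)
    have habs : ‖-t * Complex.I‖ = ‖t‖ := by simp
    rw [habs] at this
    exact this.trans (le_of_eq (by norm_num [Nat.factorial]; all_goals ring))
  have hid : Complex.cos t - (1 - t^2/2)
      = ((Complex.exp (t*Complex.I) - ∑ m ∈ Finset.range 4, (t*Complex.I)^m / m.factorial)
        + (Complex.exp (-t*Complex.I) - ∑ m ∈ Finset.range 4, (-t*Complex.I)^m / m.factorial))
          / 2 := by
    simp only [Complex.cos, Finset.sum_range_succ, Finset.sum_range_zero, Nat.factorial]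
    push_cast
    linear_combination (t^2/2) * Complex.I_sq
  rw [hid, norm_div, Complex.norm_two]
  have := (norm_add_le (Complex.exp (t*Complex.I)
      - ∑ m ∈ Finset.range 4, (t*Complex.I)^m / m.factorial)
    (Complex.exp (-t*Complex.I) - ∑ m ∈ Finset.range 4, (-t*Complex.I)^m / m.factorial))
  have h0 : (0:ℝ) ≤ ‖t‖ ^ 4 := by positivity
  linarith


set_option maxHeartbeats 1000000 in
lemma P_eq (a p q n u : ℂ) (hpq : p*q = 1) (hnu : n*u = 1) :
    (4*p*n + 4*(-a*u + (a^3/3 - a^2*q)*u^3)) *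
        ((-a*u + (a^3/3 - a^2*q)*u^3) - (-a*u + (a^3/3 - a^2*q)*u^3)^3/6)
      + (4*p*a)*(1 - (-a*u + (a^3/3 - a^2*q)*u^3)^2/2)
    = p * u^4 *
      ( 8*a^3*q^2 - (16/3)*a^4*q + (2/3)*a^5
      + u^2*(4*a^4*q^3 - (16/3)*a^5*q^2 + (4/3)*a^6*q)
      + u^4*(-(10/3)*a^6*q^3 + 2*a^7*q^2 - (2/9)*a^8*q - (2/81)*a^9)
      + u^6*(-(8/3)*a^7*q^4 + (8/3)*a^8*q^3 - (8/9)*a^9*q^2 + (8/81)*a^10*q)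
      + u^8*(-(2/3)*a^8*q^5 + (8/9)*a^9*q^4 - (4/9)*a^10*q^3 + (8/81)*a^11*q^2 - (2/243)*a^12*q) ) := by
  linear_combination ((-4:ℂ)*a^2*u^2 + (-8:ℂ)*a^3*q*u^4 + ((10:ℂ)/3)*a^4*u^4 + (-4:ℂ)*a^4*q^2*u^6 + ((16:ℂ)/3)*a^5*q*u^6 + ((-4:ℂ)/3)*a^6*u^6 + (4:ℂ)*a^6*q^2*u^8 + ((-8:ℂ)/3)*a^7*q*u^8 + ((8:ℂ)/3)*a^7*q^3*u^10 + ((4:ℂ)/9)*a^8*u^8 + ((-8:ℂ)/3)*a^8*q^2*u^10 + ((2:ℂ)/3)*a^8*q^4*u^12 + ((8:ℂ)/9)*a^9*q*u^10 + ((-8:ℂ)/9)*a^9*q^3*u^12 + ((-8:ℂ)/81)*a^10*u^10 + ((4:ℂ)/9)*a^10*q^2*u^12 + ((-8:ℂ)/81)*a^11*q*u^12 + ((2:ℂ)/243)*a^12*u^12) * hpq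
    + ((-4:ℂ)*a*p + (-4:ℂ)*a^2*p*q*u^2 + (2:ℂ)*a^3*p*u^2 + (2:ℂ)*a^4*p*q*u^4 + ((-2:ℂ)/3)*a^5*p*u^4 + (2:ℂ)*a^5*p*q^2*u^6 + ((-4:ℂ)/3)*a^6*p*q*u^6 + ((2:ℂ)/3)*a^6*p*q^3*u^8 + ((2:ℂ)/9)*a^7*p*u^6 + ((-2:ℂ)/3)*a^7*p*q^2*u^8 + ((2:ℂ)/9)*a^8*p*q*u^8 + ((-2:ℂ)/81)*a^9*p*u^8) * hnu

section numeric

private lemma numPi (N : ℝ) (hN0 : 0 ≤ N) : 12*N ≤ 4*Real.pi*N := by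
  nlinarith [Real.pi_gt_three]

private lemma numR (K mc N : ℝ) (hm3 : 1 ≤ mc) (hKN : K ≤ N) (hN1 : 1 ≤ N) :
    K/N^5 ≤ mc/N := by
  have hN0 : (0:ℝ) < N := by linarith
  rw [div_le_div_iff₀ (by positivity) hN0]
  have h2 : N^2 ≤ N^5 := pow_le_pow_right₀ hN1 (by norm_num)
  nlinarith

private lemma numD (K N : ℝ) (hK : 0 ≤ K) (hN0 : 0 < N) :
    (K/N^4)/(12*N) ≤ (K/N^5)/2 := by
  have e : (K/N^4)/(12*N) = K/(12*N^5) := by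
    rw [div_div]; congr 1; ring
  have e2 : (K/N^5)/2 = K/(2*N^5) := by ring
  have h25 : (2:ℝ)*N^5 ≤ 12*N^5 := by nlinarith [pow_pos hN0 5]
  rw [e, e2]
  exact div_le_div₀ hK (le_refl K) (by positivity) h25

private lemma numB (x : ℝ) (h0 : 0 ≤ x) (h1 : x ≤ 1) :
    x^3 ≤ x ∧ x^5 ≤ x ∧ x^4 ≤ x^2 := by
  have h2 : x^2 ≤ 1 := pow_le_one₀ h0 h1
  have h4 : x^4 ≤ 1 := pow_le_one₀ h0 h1
  refine ⟨?_, ?_, ?_⟩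
  · nlinarith
  · nlinarith
  · nlinarith [sq_nonneg x]

private lemma numN (mc X s co A : ℝ) (hm : 1 ≤ mc) (hX0 : 0 ≤ X) (hs : s ≤ 2*X)
    (hco : co ≤ 2) (hco0 : 0 ≤ co) (hA : A ≤ mc) (hA0 : 0 ≤ A) (hs0 : 0 ≤ s) :
    4*s + 4*X*co + A*s ≤ 18*mc*X := by
  nlinarith [mul_nonneg hX0 hco0, mul_nonneg hA0 hs0, mul_le_mul hA hs hs0 (by linarith)]

private lemma numQ (mc X N : ℝ) (hm : 1 ≤ mc) (hX0 : 0 ≤ X) (hN0 : 0 < N)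
    (hXN : X*N ≤ 3*mc^3) (hN2 : 36*mc^6 ≤ N^2) :
    X^2 ≤ 1/4 ∧ 18*mc*X/(12*N) ≤ 1/4 := by
  have hm6 : 1 ≤ mc^6 := one_le_pow₀ hm
  have s1 : (X*N)*(X*N) ≤ (3*mc^3)*(3*mc^3) :=
    mul_le_mul hXN hXN (mul_nonneg hX0 hN0.le) (by positivity)
  constructor
  · nlinarith [mul_le_mul_of_nonneg_left hN2 (sq_nonneg X)]
  · rw [div_le_iff₀ (by positivity)]
    have hm4 : mc^4 ≤ mc^6 := pow_le_pow_right₀ hm (by norm_num)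
    nlinarith [mul_le_mul_of_nonneg_left hXN (by positivity : (0:ℝ) ≤ 18*mc), mul_pos hN0 hN0]

end numeric

set_option maxHeartbeats 8000000 in
lemma key_root (c1 : ℂ) : ∃ C : ℝ, 0 < C ∧ ∃ N₀ : ℕ, 1 ≤ N₀ ∧ ∀ N : ℕ, N₀ ≤ N →
    ∃ t : ℂ, (4*((Real.pi:ℂ)*(N:ℂ) + t) * Complex.sin t + c1 * Complex.cos t = 0) ∧
      ‖t - (-(c1/(4*(Real.pi:ℂ)))/(N:ℂ)
        + ((c1/(4*(Real.pi:ℂ)))^3/3 - (c1/(4*(Real.pi:ℂ)))^2/(Real.pi:ℂ))/(N:ℂ)^3)‖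
        ≤ C / (N:ℝ)^5 := by
  have hπ3 : (3:ℝ) < Real.pi := Real.pi_gt_three
  have hπ4 : Real.pi < 4 := by linarith [Real.pi_lt_d2]
  set p : ℂ := (Real.pi : ℂ) with hpdef
  have hp : p ≠ 0 := by
    simp only [hpdef, ne_eq, Complex.ofReal_eq_zero]; exact Real.pi_ne_zero
  have habsp : ‖p‖ = Real.pi := by
    rw [hpdef, Complex.norm_real, Real.norm_eq_abs, abs_of_pos Real.pi_pos]
  have hπreal : Real.pi = ‖p‖ := habsp.symm
  set a : ℂ := c1/(4*p) with hadef
  set b : ℂ := a^3/3 - a^2/p with hbdef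
  set m : ℝ := ‖c1‖ + 1 with hmdef
  have hc1m : ‖c1‖ ≤ m := by simp [hmdef]
  clear_value m
  have hm : 1 ≤ m := by rw [hmdef]; linarith [norm_nonneg c1]
  have hm3 : 1 ≤ m^3 := one_le_pow₀ hm
  have hm6 : 1 ≤ m^6 := one_le_pow₀ hm
  have hm15 : 1 ≤ m^15 := one_le_pow₀ hm
  have hm0 : 0 < m := by linarith
  have ha : ‖a‖ ≤ m := by
    rw [hadef, norm_div, norm_mul, habsp]
    have h4 : ‖(4:ℂ)‖ = 4 := by norm_num [Complex.norm_ofNat]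
    rw [h4, div_le_iff₀ (by positivity)]
    nlinarith [norm_nonneg c1, hm0, hπ3]
  have ha0 : 0 ≤ ‖a‖ := norm_nonneg a
  have hb : ‖b‖ ≤ m^3 := by
    rw [hbdef]
    refine (norm_sub_le _ _).trans ?_
    have h2 : ‖a^3/3‖ = ‖a‖^3 / 3 := by
      rw [norm_div, norm_pow]; norm_num [Complex.norm_ofNat]
    have h3 : ‖a^2/p‖ = ‖a‖^2 / Real.pi := by
      rw [norm_div, norm_pow, habsp]
    rw [h2, h3]
    have h4 : ‖a‖^3 ≤ m^3 := pow_le_pow_left₀ ha0 ha 3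
    have h5 : ‖a‖^2 ≤ m^2 := pow_le_pow_left₀ ha0 ha 2
    have h6 : ‖a‖^2 / Real.pi ≤ m^2/3 :=
      div_le_div₀ (by positivity) h5 (by norm_num) (by linarith)
    have h7 : m^2 ≤ m^3 := by nlinarith
    linarith
  have hc14pa : c1 = 4*p*a := by rw [hadef]; field_simp
  set q : ℂ := p⁻¹ with hqdef
  have hpq1 : p * q = 1 := by rw [hqdef]; exact mul_inv_cancel₀ hp
  clear_value p a b q
  set F : ℂ → ℂ := fun u =>
      8*a^3*q^2 - (16/3)*a^4*q + (2/3)*a^5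
      + u^2*(4*a^4*q^3 - (16/3)*a^5*q^2 + (4/3)*a^6*q)
      + u^4*(-(10/3)*a^6*q^3 + 2*a^7*q^2 - (2/9)*a^8*q - (2/81)*a^9)
      + u^6*(-(8/3)*a^7*q^4 + (8/3)*a^8*q^3 - (8/9)*a^9*q^2 + (8/81)*a^10*q)
      + u^8*(-(2/3)*a^8*q^5 + (8/9)*a^9*q^4 - (4/9)*a^10*q^3 + (8/81)*a^11*q^2 - (2/243)*a^12*q)
    with hFdef
  have hFcont : Continuous F := by rw [hFdef]; fun_prop
  clear_value F
  obtain ⟨CE0, hCE0⟩ := (isCompact_closedBall (0:ℂ) 1).exists_bound_of_continuousOn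
    hFcont.continuousOn
  set CE : ℝ := max CE0 1 with hCEdef
  have hCE1 : 1 ≤ CE := le_max_right _ _
  have hCE0' : ∀ x ∈ Metric.closedBall (0:ℂ) 1, ‖F x‖ ≤ CE :=
    fun x hx => (hCE0 x hx).trans (le_max_left _ _)
  clear_value CE
  set K : ℝ := 4*CE + 8*m^15 with hKdef
  have hK : 0 < K := by rw [hKdef]; positivity
  have hKm : 4*CE + 8*m^15 ≤ K := le_of_eq hKdef.symm
  clear_value K
  refine ⟨K, hK, ⌈6*m^3 + K⌉₊, ?_, ?_⟩
  · refine Nat.one_le_iff_ne_zero.mpr ?_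
    simp only [ne_eq, Nat.ceil_eq_zero, not_le]
    positivity
  intro N hN
  have hNr : (6*m^3 + K : ℝ) ≤ N := le_trans (Nat.le_ceil _) (by exact_mod_cast hN)
  have hN6 : 6*m^3 ≤ (N:ℝ) := by linarith
  have hKN : K ≤ (N:ℝ) := by linarith [hm3]
  have hN1 : (1:ℝ) ≤ (N:ℝ) := by linarith [hm3, hK]
  have hN0 : (0:ℝ) < (N:ℝ) := by linarith
  set n : ℂ := (N:ℂ) with hndef
  have hn : n ≠ 0 := by
    rw [hndef, Ne, Nat.cast_eq_zero]
    exact_mod_cast hN0.ne'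
  have habsn : ‖n‖ = (N:ℝ) := by rw [hndef, Complex.norm_natCast]
  clear_value n
  set t₀ : ℂ := -a/n + b/n^3 with ht₀def
  clear_value t₀
  have habst₀ : ‖t₀‖ ≤ 2*m^3/N := by
    rw [ht₀def]
    refine (norm_add_le _ _).trans ?_
    rw [norm_div, norm_div, norm_neg, norm_pow, habsn]
    have e1 : ‖a‖ ≤ m^3 := ha.trans (le_self_pow₀ hm (by norm_num))
    have e2 : (N:ℝ) ≤ (N:ℝ)^3 := le_self_pow₀ hN1 (by norm_num)
    have h1 : ‖a‖ / (N:ℝ) ≤ m^3/N := by gcongr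
    have h2 : ‖b‖ / (N:ℝ)^3 ≤ m^3/N :=
      div_le_div₀ (by positivity) hb hN0 e2
    have h3 : 2*m^3/(N:ℝ) = m^3/N + m^3/N := by ring
    linarith
  have ht₀1 : ‖t₀‖ ≤ 1/2 := by
    refine habst₀.trans ?_
    rw [div_le_iff₀ hN0]
    linarith
  have ht₀0 : 0 ≤ ‖t₀‖ := norm_nonneg _
  set ε₁ : ℂ := Complex.sin t₀ - (t₀ - t₀^3/6) with hε₁def
  set ε₂ : ℂ := Complex.cos t₀ - (1 - t₀^2/2) with hε₂def
  clear_value ε₁ ε₂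
  have hε₁ : ‖ε₁‖ ≤ ‖t₀‖^5/100 := by
    rw [hε₁def]; exact sin_taylor5 t₀ (by linarith)
  have hε₂ : ‖ε₂‖ ≤ ‖t₀‖^4/19 := by
    rw [hε₂def]; exact cos_taylor4 t₀ (by linarith)
  have hnu1 : n * n⁻¹ = 1 := mul_inv_cancel₀ hn
  have ht₀u : t₀ = -a*n⁻¹ + (a^3/3 - a^2*q)*(n⁻¹)^3 := by
    rw [ht₀def, hbdef, hqdef]; field_simp
  have hPeq : (4*p*n + 4*t₀) * (t₀ - t₀^3/6) + c1*(1 - t₀^2/2) = p * (n⁻¹)^4 * F n⁻¹ := by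
    rw [hc14pa, ht₀u, hFdef]
    exact P_eq a p q n n⁻¹ hpq1 hnu1
  have hun : ‖n⁻¹‖ ≤ 1 := by
    rw [norm_inv, habsn, inv_le_one_iff₀]
    right; exact hN1
  have hFb : ‖F n⁻¹‖ ≤ CE := by
    refine hCE0' _ ?_
    simpa [Metric.mem_closedBall, dist_zero_right] using hun
  have habsP : ‖(4*p*n + 4*t₀) * (t₀ - t₀^3/6) + c1*(1 - t₀^2/2)‖
      ≤ 4*CE/(N:ℝ)^4 := by
    rw [hPeq, norm_mul, norm_mul, norm_pow, norm_inv, habsp, habsn]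
    have hx : (0:ℝ) ≤ ((N:ℝ)⁻¹)^4 := by positivity
    have s1 : Real.pi * ((N:ℝ)⁻¹)^4 ≤ 4 * ((N:ℝ)⁻¹)^4 :=
      mul_le_mul_of_nonneg_right hπ4.le hx
    have s2 : Real.pi * ((N:ℝ)⁻¹)^4 * ‖F n⁻¹‖ ≤ 4 * ((N:ℝ)⁻¹)^4 * CE :=
      mul_le_mul s1 hFb (norm_nonneg _) (by positivity)
    refine s2.trans (le_of_eq ?_)
    field_simp
  have hgval : (4*p*n + 4*t₀) * Complex.sin t₀ + c1 * Complex.cos t₀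
      = ((4*p*n + 4*t₀) * (t₀ - t₀^3/6) + c1*(1 - t₀^2/2)) + (4*p*n + 4*t₀)*ε₁ + c1*ε₂ := by
    rw [hε₁def, hε₂def]; ring
  have habs4pn : ‖4*p*n‖ = 4*Real.pi*(N:ℝ) := by
    rw [norm_mul, norm_mul, habsp, habsn]
    norm_num [Complex.norm_ofNat]
  have h12N : 12*(N:ℝ) ≤ 4*Real.pi*(N:ℝ) := numPi _ hN0.le
  have h4pn : (4:ℂ)*p*n ≠ 0 := mul_ne_zero (mul_ne_zero (by norm_num) hp) hn
  have habs4pnt : ‖4*p*n + 4*t₀‖ ≤ 20*(N:ℝ) := by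
    refine (norm_add_le _ _).trans ?_
    rw [habs4pn, norm_mul]
    have h4 : ‖(4:ℂ)‖ = 4 := by norm_num [Complex.norm_ofNat]
    rw [h4]
    have h5 : Real.pi*(N:ℝ) ≤ 4*(N:ℝ) := mul_le_mul_of_nonneg_right hπ4.le hN0.le
    linarith
  have ht₀5 : ‖t₀‖^5 ≤ (2*m^3/N)^5 := pow_le_pow_left₀ ht₀0 habst₀ 5
  have ht₀4 : ‖t₀‖^4 ≤ (2*m^3/N)^4 := pow_le_pow_left₀ ht₀0 habst₀ 4
  have hg0 : ‖(4*p*n + 4*t₀) * Complex.sin t₀ + c1 * Complex.cos t₀‖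
      ≤ K/(N:ℝ)^4 := by
    rw [hgval]
    refine (norm_add_le _ _).trans ?_
    refine le_trans (add_le_add (norm_add_le _ _) (le_refl _)) ?_
    rw [norm_mul, norm_mul]
    have e1 : ‖4*p*n + 4*t₀‖ * ‖ε₁‖ ≤ 20*(N:ℝ) * ((2*m^3/N)^5/100) := by
      refine mul_le_mul habs4pnt (hε₁.trans ?_) (norm_nonneg _) (by positivity)
      gcongr
    have e2 : ‖c1‖ * ‖ε₂‖ ≤ m * ((2*m^3/N)^4/19) := by
      refine mul_le_mul hc1m (hε₂.trans ?_) (norm_nonneg _) (by positivity)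
      gcongr
    have e3 : 20*(N:ℝ) * ((2*m^3/N)^5/100) = (32/5)*m^15/(N:ℝ)^4 := by
      field_simp; ring
    have e4 : m * ((2*m^3/N)^4/19) = (16/19)*m^13/(N:ℝ)^4 := by
      field_simp; ring
    have e5 : m^13 ≤ m^15 := pow_le_pow_right₀ hm (by norm_num)
    have e6 : (4*CE + (32/5)*m^15 + (16/19)*m^13)/(N:ℝ)^4 ≤ K/(N:ℝ)^4 := by
      gcongr
      linarith [e5, hKm, hm15]
    have e7 : (4*CE + (32/5)*m^15 + (16/19)*m^13)/(N:ℝ)^4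
        = 4*CE/(N:ℝ)^4 + (32/5)*m^15/(N:ℝ)^4 + (16/19)*m^13/(N:ℝ)^4 := by
      ring
    rw [e3] at e1
    rw [e4] at e2
    rw [e7] at e6
    linarith [habsP]
  -- the contraction map
  set r : ℝ := K/(N:ℝ)^5 with hrdef
  have hr0 : 0 < r := by rw [hrdef]; positivity
  have hrm : r ≤ m^3/(N:ℝ) := by
    rw [hrdef]; exact numR K (m^3) (N:ℝ) hm3 hKN hN1
  have hballt : ∀ t ∈ Metric.closedBall t₀ r, ‖t‖ ≤ 3*m^3/(N:ℝ) := by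
    intro t ht
    rw [Metric.mem_closedBall, Complex.dist_eq] at ht
    have h1 : ‖t‖ ≤ ‖t - t₀‖ + ‖t₀‖ := by
      simpa using norm_add_le (t - t₀) t₀
    have h2 : 2*m^3/(N:ℝ) + m^3/(N:ℝ) = 3*m^3/(N:ℝ) := by ring
    linarith [hrm]
  have hball1 : ∀ t ∈ Metric.closedBall t₀ r, ‖t‖ ≤ 1/2 := by
    intro t ht
    refine (hballt t ht).trans ?_
    rw [div_le_iff₀ hN0]; linarith
  have hN2 : 36*m^6 ≤ (N:ℝ)^2 := by nlinarith [mul_le_mul hN6 hN6 (by positivity : (0:ℝ) ≤ 6*m^3) hN0.le]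
  -- derivative bound on the ball
  have hder : ∀ t ∈ Metric.closedBall t₀ r,
      ‖1 - (4*Complex.sin t + (4*p*n + 4*t)*Complex.cos t - c1*Complex.sin t)/(4*p*n)‖ ≤ 1/2 := by
    intro t ht
    have hX := hballt t ht
    have hX1 : ‖t‖ ≤ 1 := le_trans (hball1 t ht) (by norm_num)
    have hX0 : 0 ≤ ‖t‖ := norm_nonneg t
    have hsinT := sin_taylor5 t hX1
    have hcosT := cos_taylor4 t hX1
    obtain ⟨hp3, hp5, hp4⟩ := numB (‖t‖) hX0 hX1
    have hsin2 : ‖Complex.sin t‖ ≤ 2*‖t‖ := by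
      have h1 : ‖Complex.sin t‖
          ≤ ‖Complex.sin t - (t - t^3/6)‖ + ‖t - t^3/6‖ := by
        have h0 := norm_add_le (Complex.sin t - (t - t^3/6)) (t - t^3/6)
        rw [sub_add_cancel] at h0
        exact h0
      have h2 : ‖t - t^3/6‖ ≤ ‖t‖ + ‖t‖^3/6 := by
        refine (norm_sub_le _ _).trans (le_of_eq ?_)
        rw [norm_div, norm_pow]
        norm_num
      linarith
    have hcos1 : ‖1 - Complex.cos t‖ ≤ ‖t‖^2 := by
      have h0 : (1:ℂ) - Complex.cos t = -((Complex.cos t - (1 - t^2/2)) - t^2/2) := by ring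
      rw [h0, norm_neg]
      refine (norm_sub_le _ _).trans ?_
      have h2 : ‖t^2/2‖ = ‖t‖^2/2 := by
        rw [norm_div, norm_pow]
        norm_num [Complex.norm_ofNat]
      rw [h2]
      linarith [pow_nonneg hX0 2]
    have hcos2 : ‖Complex.cos t‖ ≤ 2 := by
      have h1 : ‖Complex.cos t‖ ≤ ‖1 - Complex.cos t‖ + 1 := by
        have h2 := norm_add_le (Complex.cos t - 1) 1
        rw [sub_add_cancel] at h2
        have h3 : Complex.cos t - 1 = -((1:ℂ) - Complex.cos t) := by ring
        rw [h3, norm_neg] at h2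
        simpa using h2
      have h4 : ‖t‖^2 ≤ 1 := pow_le_one₀ hX0 hX1
      linarith
    have hrw : (1:ℂ) - (4*Complex.sin t + (4*p*n + 4*t)*Complex.cos t - c1*Complex.sin t)/(4*p*n)
        = (1 - Complex.cos t) - (4*Complex.sin t + 4*t*Complex.cos t - c1*Complex.sin t)/(4*p*n) := by
      field_simp
      ring
    rw [hrw]
    refine (norm_sub_le _ _).trans ?_
    have hnum : ‖4*Complex.sin t + 4*t*Complex.cos t - c1*Complex.sin t‖
        ≤ 18*m*‖t‖ := by
      refine le_trans (norm_sub_le _ _) ?_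
      refine le_trans (add_le_add_left (norm_add_le _ _) _) ?_
      rw [norm_mul, norm_mul, norm_mul, norm_mul]
      have h4 : ‖(4:ℂ)‖ = 4 := by norm_num [Complex.norm_ofNat]
      rw [h4]
      exact numN m (‖t‖) (‖Complex.sin t‖) (‖Complex.cos t‖)
        (‖c1‖) hm hX0 hsin2 hcos2 (norm_nonneg _) hc1m (norm_nonneg _)
        (norm_nonneg _)
    have hdiv : ‖(4*Complex.sin t + 4*t*Complex.cos t - c1*Complex.sin t)/(4*p*n)‖
        ≤ 18*m*‖t‖/(12*(N:ℝ)) := by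
      rw [norm_div, habs4pn]
      exact div_le_div₀ (by positivity) hnum (by positivity) h12N
    have hXN : ‖t‖ * (N:ℝ) ≤ 3*m^3 := by
      have := (le_div_iff₀ hN0).mp hX
      linarith
    obtain ⟨q1, q2⟩ := numQ m (‖t‖) (N:ℝ) hm hX0 hN0 hXN hN2
    linarith
  -- Lipschitz on the ball
  have hΦd : ∀ t : ℂ, HasDerivAt
      (fun t => t - ((4*p*n + 4*t) * Complex.sin t + c1 * Complex.cos t)/(4*p*n))
      (1 - (4*Complex.sin t + (4*p*n + 4*t)*Complex.cos t - c1*Complex.sin t)/(4*p*n)) t := by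
    intro t
    have h1 : HasDerivAt (fun t : ℂ => 4*p*n + 4*t) 4 t := by
      exact ((hasDerivAt_const t ((4:ℂ)*p*n)).add ((hasDerivAt_id t).const_mul (4:ℂ))).congr_deriv (by simp)
    have h2 := Complex.hasDerivAt_sin t
    have h3 := Complex.hasDerivAt_cos t
    have h4 := (h1.mul h2).add (h3.const_mul c1)
    have h5 := (hasDerivAt_id t).sub (h4.div_const (4*p*n))
    exact h5.congr_deriv (by ring)
  have hlip : LipschitzOnWith (1/2 : ℝ≥0)
      (fun t => t - ((4*p*n + 4*t) * Complex.sin t + c1 * Complex.cos t)/(4*p*n))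
      (Metric.closedBall t₀ r) := by
    refine (convex_closedBall t₀ r).lipschitzOnWith_of_nnnorm_hasFDerivWithin_le
      (f' := fun t => ContinuousLinearMap.smulRight (1 : ℂ →L[ℂ] ℂ)
        (1 - (4*Complex.sin t + (4*p*n + 4*t)*Complex.cos t - c1*Complex.sin t)/(4*p*n)))
      (fun t ht => ((hΦd t).hasFDerivAt).hasFDerivWithinAt) ?_
    intro t ht
    rw [← NNReal.coe_le_coe, coe_nnnorm, ContinuousLinearMap.norm_smulRight_apply]
    have h1 : ‖(1 : ℂ →L[ℂ] ℂ)‖ = 1 := by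
      rw [ContinuousLinearMap.one_def, ContinuousLinearMap.norm_id]
    rw [h1, one_mul]
    have h2 : ((1/2 : ℝ≥0) : ℝ) = 1/2 := by norm_num
    rw [h2]
    exact hder t ht
  have hmaps : Set.MapsTo
      (fun t => t - ((4*p*n + 4*t) * Complex.sin t + c1 * Complex.cos t)/(4*p*n))
      (Metric.closedBall t₀ r) (Metric.closedBall t₀ r) := by
    intro t ht
    rw [Metric.mem_closedBall]
    have hd1 : dist (t - ((4*p*n + 4*t) * Complex.sin t + c1 * Complex.cos t)/(4*p*n))
        (t₀ - ((4*p*n + 4*t₀) * Complex.sin t₀ + c1 * Complex.cos t₀)/(4*p*n))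
        ≤ (1/2:ℝ) * dist t t₀ := by
      have := hlip.dist_le_mul t ht t₀ (Metric.mem_closedBall_self hr0.le)
      have h2 : ((1/2 : ℝ≥0) : ℝ) = 1/2 := by norm_num
      rw [h2] at this
      exact this
    have hd2 : dist (t₀ - ((4*p*n + 4*t₀) * Complex.sin t₀ + c1 * Complex.cos t₀)/(4*p*n)) t₀
        ≤ (K/(N:ℝ)^4)/(12*(N:ℝ)) := by
      rw [Complex.dist_eq]
      have hΦt₀ : t₀ - ((4*p*n + 4*t₀) * Complex.sin t₀ + c1 * Complex.cos t₀)/(4*p*n) - t₀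
          = -(((4*p*n + 4*t₀) * Complex.sin t₀ + c1 * Complex.cos t₀)/(4*p*n)) := by ring
      rw [hΦt₀, norm_neg, norm_div, habs4pn]
      exact div_le_div₀ (by positivity) hg0 (by positivity) h12N
    have hd3 : (K/(N:ℝ)^4)/(12*(N:ℝ)) ≤ r/2 := by
      rw [hrdef]; exact numD K (N:ℝ) hK.le hN0
    have htr := dist_triangle
      (t - ((4*p*n + 4*t) * Complex.sin t + c1 * Complex.cos t)/(4*p*n))
      (t₀ - ((4*p*n + 4*t₀) * Complex.sin t₀ + c1 * Complex.cos t₀)/(4*p*n)) t₀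
    have hdt : dist t t₀ ≤ r := Metric.mem_closedBall.mp ht
    linarith
  have hcontr : ContractingWith (1/2 : ℝ≥0) (hmaps.restrict _ _ _) :=
    ⟨one_half_lt_one, hlip.mapsToRestrict hmaps⟩
  obtain ⟨tst, hts, hfix, -⟩ := ContractingWith.exists_fixedPoint'
    Metric.isClosed_closedBall.isComplete hmaps hcontr
    (Metric.mem_closedBall_self hr0.le) (edist_ne_top _ _)
  have hgz : (4*p*n + 4*tst) * Complex.sin tst + c1 * Complex.cos tst = 0 := by
    have h1 : tst - ((4*p*n + 4*tst) * Complex.sin tst + c1 * Complex.cos tst)/(4*p*n) = tst :=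
      hfix
    have h2 : ((4*p*n + 4*tst) * Complex.sin tst + c1 * Complex.cos tst)/(4*p*n) = 0 :=
      sub_eq_self.mp h1
    exact (div_eq_zero_iff.mp h2).resolve_right h4pn
  refine ⟨tst, by linear_combination hgz, ?_⟩
  have hd := Metric.mem_closedBall.mp hts
  rw [Complex.dist_eq] at hd
  exact hd.trans_eq hrdef

/-- Appendix, part 3.2: asymptotics of the second family of square roots of
eigenvalues for the boundary conditions `y(0) = y(1)`,
`y′(0) − y′(1) + c₁y(0) = 0`:
`ρ_N = 2πN − c₁/(2πN) + (c₁³ − 12c₁²)/(96π³N³) + O(N⁻⁵)`. -/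
theorem eigenvalue_asymptotics_periodic_perturbed (c1 : ℂ) :
    ∃ C : ℝ, 0 < C ∧ ∃ N₀ : ℕ, 1 ≤ N₀ ∧ ∃ ρ : ℕ → ℂ,
      ∀ N : ℕ, N₀ ≤ N →
        (∃ y : ℝ → ℂ, ContDiff ℝ 2 y ∧ (∃ x ∈ Set.Icc (0:ℝ) 1, y x ≠ 0) ∧
          (∀ x ∈ Set.Icc (0:ℝ) 1, -(deriv (deriv y) x) = (ρ N) ^ 2 * y x) ∧
          y 0 = y 1 ∧ deriv y 0 - deriv y 1 + c1 * y 0 = 0) ∧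
        ‖ρ N - 2 * (Real.pi : ℂ) * N + c1 / (2 * (Real.pi : ℂ) * N)
            - (c1 ^ 3 - 12 * c1 ^ 2) / (96 * (Real.pi : ℂ) ^ 3 * N ^ 3)‖
          ≤ C / (N : ℝ) ^ 5 := by
  obtain ⟨C, hC, N₀, hN₀, hkey⟩ := key_root c1
  refine ⟨2*C, by linarith, N₀, hN₀,
    fun N => if h : N₀ ≤ N then 2*(Real.pi:ℂ)*N + 2*Classical.choose (hkey N h) else 0, ?_⟩
  intro N hN
  have hNpos : 0 < N := lt_of_lt_of_le hN₀ hN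
  have hNR : (0:ℝ) < (N:ℝ) := by exact_mod_cast hNpos
  have hnC : ((N:ℂ)) ≠ 0 := by
    simp only [ne_eq, Nat.cast_eq_zero]; omega
  have hpC : ((Real.pi:ℂ)) ≠ 0 := by
    simp only [ne_eq, Complex.ofReal_eq_zero]; exact Real.pi_ne_zero
  set t : ℂ := Classical.choose (hkey N hN) with htdef
  obtain ⟨heq, hbound⟩ := Classical.choose_spec (hkey N hN)
  simp only [dif_pos hN, ← htdef]
  set ρN : ℂ := 2*(Real.pi:ℂ)*N + 2*t with hρdef
  set w : ℂ := (Real.pi:ℂ)*(N:ℂ) + t with hwdef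
  -- trig identities
  have hsinNπ : Complex.sin ((N:ℂ)*(Real.pi:ℂ)) = 0 := Complex.sin_nat_mul_pi N
  have hcosNπ : Complex.cos ((N:ℂ)*(Real.pi:ℂ)) = (-1)^N := by
    have h1 : ((N:ℂ)*(Real.pi:ℂ)) = (((N*Real.pi : ℝ)):ℂ) := by push_cast; ring
    rw [h1, ← Complex.ofReal_cos]
    have h2 : (N*Real.pi : ℝ) = N*Real.pi - 0 := by ring
    rw [h2, Real.cos_nat_mul_pi_sub]
    push_cast
    simp
  have hsinw : Complex.sin w = (-1)^N * Complex.sin t := by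
    have h1 : w = (N:ℂ)*(Real.pi:ℂ) + t := by rw [hwdef]; ring
    rw [h1, Complex.sin_add, hsinNπ, hcosNπ]
    ring
  have hcosw : Complex.cos w = (-1)^N * Complex.cos t := by
    have h1 : w = (N:ℂ)*(Real.pi:ℂ) + t := by rw [hwdef]; ring
    rw [h1, Complex.cos_add, hsinNπ, hcosNπ]
    ring
  -- derivatives of y
  have hinner : ∀ y0 : ℝ, HasDerivAt (fun x : ℝ => ρN * ((x:ℂ) - 1/2)) ρN y0 := by
    intro y0
    have h0 : HasDerivAt (fun x : ℝ => (x:ℂ)) 1 y0 := by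
      simpa using (hasDerivAt_id y0).ofReal_comp
    have h1 := (h0.sub_const (1/2:ℂ)).const_mul ρN
    simpa using h1
  have hD : ∀ y0 : ℝ, HasDerivAt (fun x : ℝ => Complex.cos (ρN * ((x:ℂ) - 1/2)))
      (-Complex.sin (ρN * ((y0:ℂ) - 1/2)) * ρN) y0 := by
    intro y0
    have h1 := (Complex.hasDerivAt_cos (ρN * ((y0:ℂ) - 1/2))).comp y0 (hinner y0)
    exact h1.congr_deriv (by ring)
  have hderiv1 : deriv (fun x : ℝ => Complex.cos (ρN * ((x:ℂ) - 1/2)))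
      = fun y0 : ℝ => -Complex.sin (ρN * ((y0:ℂ) - 1/2)) * ρN :=
    funext fun y0 => (hD y0).deriv
  have hD2 : ∀ y0 : ℝ, HasDerivAt (fun x : ℝ => -Complex.sin (ρN * ((x:ℂ) - 1/2)) * ρN)
      (-(Complex.cos (ρN * ((y0:ℂ) - 1/2)) * ρN) * ρN) y0 := by
    intro y0
    have h0 := (Complex.hasDerivAt_sin (ρN * ((y0:ℂ) - 1/2))).comp y0 (hinner y0)
    have h1 : HasDerivAt (fun x : ℝ => Complex.sin (ρN * ((x:ℂ) - 1/2)))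
        (Complex.cos (ρN * ((y0:ℂ) - 1/2)) * ρN) y0 := by
      exact h0
    have h2 := h1.neg.mul_const ρN
    simpa using h2
  constructor
  · refine ⟨fun x : ℝ => Complex.cos (ρN * ((x:ℂ) - 1/2)), ?_, ⟨1/2, by norm_num, ?_⟩, ?_, ?_, ?_⟩
    · have h1 : ContDiff ℝ 2 (fun x : ℝ => ρN * ((x:ℂ) - 1/2)) :=
        contDiff_const.mul (Complex.ofRealCLM.contDiff.sub contDiff_const)
      exact (Complex.contDiff_cos.restrict_scalars ℝ).comp h1
    · show Complex.cos (ρN * (((1/2:ℝ):ℂ) - 1/2)) ≠ 0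
      have h1 : ρN * (((1/2:ℝ):ℂ) - 1/2) = 0 := by push_cast; ring
      rw [h1, Complex.cos_zero]
      norm_num
    · intro x hx
      rw [hderiv1, (hD2 x).deriv]
      ring
    · show Complex.cos (ρN * (((0:ℝ):ℂ) - 1/2)) = Complex.cos (ρN * (((1:ℝ):ℂ) - 1/2))
      have h1 : ρN * (((0:ℝ):ℂ) - 1/2) = -(ρN * (((1:ℝ):ℂ) - 1/2)) := by push_cast; ring
      rw [h1, Complex.cos_neg]
    · rw [hderiv1]
      show -Complex.sin (ρN * (((0:ℝ):ℂ) - 1/2)) * ρN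
          - -Complex.sin (ρN * (((1:ℝ):ℂ) - 1/2)) * ρN
          + c1 * Complex.cos (ρN * (((0:ℝ):ℂ) - 1/2)) = 0
      have e0 : ρN * (((0:ℝ):ℂ) - 1/2) = -w := by rw [hρdef, hwdef]; push_cast; ring
      have e1 : ρN * (((1:ℝ):ℂ) - 1/2) = w := by rw [hρdef, hwdef]; push_cast; ring
      rw [e0, e1, Complex.sin_neg, Complex.cos_neg, hsinw, hcosw]
      have hw4 : ρN = 2*w := by rw [hρdef, hwdef]; ring
      rw [hw4]
      have heq' : 4*w*Complex.sin t + c1*Complex.cos t = 0 := by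
        rw [hwdef]; linear_combination heq
      linear_combination ((-1:ℂ)^N) * heq'
  · have hident : ρN - 2 * (Real.pi : ℂ) * N + c1 / (2 * (Real.pi : ℂ) * N)
        - (c1 ^ 3 - 12 * c1 ^ 2) / (96 * (Real.pi : ℂ) ^ 3 * N ^ 3)
        = 2 * (t - (-(c1/(4*(Real.pi:ℂ)))/(N:ℂ)
          + ((c1/(4*(Real.pi:ℂ)))^3/3 - (c1/(4*(Real.pi:ℂ)))^2/(Real.pi:ℂ))/(N:ℂ)^3)) := by
      rw [hρdef]
      ring
    rw [hident, norm_mul, Complex.norm_two]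
    have h2 : 2*C/(N:ℝ)^5 = 2*(C/(N:ℝ)^5) := by ring
    rw [h2]
    exact mul_le_mul_of_nonneg_left hbound (by norm_num)
end

section
/- Let c_0, f_0, c_1, f_1 ∈ ℂ. Then there exist a constant C > 0, an integer N₀ ≥ 1, and complex numbers ρ_N for N ≥ N₀ such that: (i) for every N ≥ N₀ the boundary value problem −y″ = ρ_N²·y on [0,1], y′(0) + c_0·y(0) + f_0·y(1) = 0, y′(1) + c_1·y(0) + f_1·y(1) = 0 has a twice continuously differentiable solution y not identically zero on [0,1]; and (ii) for every N ≥ N₀, | ρ_N − πN − (f_1 − c_0)/(πN) − (−1)^N·(c_1 − f_0)/(πN) | ≤ C/N². -/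
set_option maxHeartbeats 1000000

open Complex Metric NNReal

noncomputable def Complex.abs : AbsoluteValue ℂ ℝ where
  toFun := norm
  map_mul' := norm_mul
  nonneg' := norm_nonneg
  eq_zero' := fun _ => norm_eq_zero
  add_le' := norm_add_le

lemma Complex.norm_eq_abs (z : ℂ) : ‖z‖ = Complex.abs z := rfl

@[simp] lemma Complex.abs_ofReal (r : ℝ) : Complex.abs (r : ℂ) = |r| := Complex.norm_real r

@[simp] lemma Complex.abs_I : Complex.abs I = 1 := Complex.norm_I

@[simp] lemma Complex.abs_two : Complex.abs 2 = 2 := Complex.norm_two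

@[simp] lemma Complex.abs_natCast (n : ℕ) : Complex.abs (n : ℂ) = n := Complex.norm_natCast n

lemma Complex.abs_exp_sub_one_le {x : ℂ} (hx : Complex.abs x ≤ 1) :
    Complex.abs (Complex.exp x - 1) ≤ 2 * Complex.abs x := Complex.norm_exp_sub_one_le hx

lemma Complex.abs_exp_sub_one_sub_id_le {x : ℂ} (hx : Complex.abs x ≤ 1) :
    Complex.abs (Complex.exp x - 1 - x) ≤ Complex.abs x ^ 2 := Complex.norm_exp_sub_one_sub_id_le hx


private lemma abs_sin_le' {z : ℂ} (h : Complex.abs z ≤ 1) : Complex.abs (Complex.sin z) ≤ 2 * Complex.abs z := by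
  have h1 : Complex.abs (-z * I) ≤ 1 := by simpa using h
  have h2 : Complex.abs (z * I) ≤ 1 := by simpa using h
  have e1 := Complex.abs_exp_sub_one_le h1
  have e2 := Complex.abs_exp_sub_one_le h2
  have hs : Complex.sin z = ((Complex.exp (-z * I) - 1) - (Complex.exp (z * I) - 1)) * I / 2 := by
    rw [show Complex.sin z = ((Complex.exp (-z * I) - Complex.exp (z * I)) * I) / 2 from rfl]; ring
  rw [hs]
  simp only [map_div₀, map_mul, Complex.abs_I, Complex.abs_two, mul_one]
  calc Complex.abs ((Complex.exp (-z*I) - 1) - (Complex.exp (z*I) - 1)) / 2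
      ≤ (Complex.abs (Complex.exp (-z*I) - 1) + Complex.abs (Complex.exp (z*I) - 1)) / 2 := by
        gcongr; exact Complex.abs.sub_le_add _ _
    _ ≤ (2 * Complex.abs (-z*I) + 2 * Complex.abs (z*I)) / 2 := by gcongr
    _ = 2 * Complex.abs z := by simp

private lemma abs_sin_sub_self' {z : ℂ} (h : Complex.abs z ≤ 1) :
    Complex.abs (Complex.sin z - z) ≤ Complex.abs z ^ 2 := by
  have h1 : Complex.abs (-z * I) ≤ 1 := by simpa using h
  have h2 : Complex.abs (z * I) ≤ 1 := by simpa using h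
  have e1 := Complex.abs_exp_sub_one_sub_id_le h1
  have e2 := Complex.abs_exp_sub_one_sub_id_le h2
  have hs : Complex.sin z - z = ((Complex.exp (-z*I) - 1 - (-z*I)) - (Complex.exp (z*I) - 1 - z*I)) * I / 2 := by
    rw [show Complex.sin z = ((Complex.exp (-z * I) - Complex.exp (z * I)) * I) / 2 from rfl]
    linear_combination (-z) * Complex.I_mul_I
  rw [hs]
  simp only [map_div₀, map_mul, Complex.abs_I, Complex.abs_two, mul_one]
  calc Complex.abs ((Complex.exp (-z*I) - 1 - (-z*I)) - (Complex.exp (z*I) - 1 - z*I)) / 2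
      ≤ (Complex.abs (Complex.exp (-z*I) - 1 - (-z*I)) + Complex.abs (Complex.exp (z*I) - 1 - z*I)) / 2 := by
        gcongr; exact Complex.abs.sub_le_add _ _
    _ ≤ (Complex.abs (-z*I) ^ 2 + Complex.abs (z*I) ^ 2) / 2 := by gcongr
    _ = Complex.abs z ^ 2 := by simp

private lemma abs_one_sub_cos' {z : ℂ} (h : Complex.abs z ≤ 1) :
    Complex.abs (1 - Complex.cos z) ≤ Complex.abs z ^ 2 := by
  have h1 : Complex.abs (-z * I) ≤ 1 := by simpa using h
  have h2 : Complex.abs (z * I) ≤ 1 := by simpa using h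
  have e1 := Complex.abs_exp_sub_one_sub_id_le h1
  have e2 := Complex.abs_exp_sub_one_sub_id_le h2
  have hs : 1 - Complex.cos z = -(((Complex.exp (z*I) - 1 - z*I) + (Complex.exp (-z*I) - 1 - (-z*I))) / 2) := by
    rw [show Complex.cos z = (Complex.exp (z * I) + Complex.exp (-z * I)) / 2 from rfl]; ring
  rw [hs, map_neg_eq_map]
  simp only [map_div₀, Complex.abs_two]
  calc Complex.abs ((Complex.exp (z*I) - 1 - z*I) + (Complex.exp (-z*I) - 1 - (-z*I))) / 2
      ≤ (Complex.abs (Complex.exp (z*I) - 1 - z*I) + Complex.abs (Complex.exp (-z*I) - 1 - (-z*I))) / 2 := by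
        gcongr; exact Complex.abs.add_le _ _
    _ ≤ (Complex.abs (z*I) ^ 2 + Complex.abs (-z*I) ^ 2) / 2 := by gcongr
    _ = Complex.abs z ^ 2 := by simp

private lemma abs_cos_le' {z : ℂ} (h : Complex.abs z ≤ 1) : Complex.abs (Complex.cos z) ≤ 2 := by
  have := abs_one_sub_cos' h
  calc Complex.abs (Complex.cos z) = Complex.abs (1 - (1 - Complex.cos z)) := by ring_nf
    _ ≤ Complex.abs (1:ℂ) + Complex.abs (1 - Complex.cos z) := Complex.abs.sub_le_add _ _
    _ ≤ 1 + Complex.abs z ^ 2 := by simp; linarith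
    _ ≤ 2 := by nlinarith [Complex.abs.nonneg z]


private lemma real_cos_pi_nat (N : ℕ) : Real.cos (Real.pi * N) = (-1)^N := by
  induction N with
  | zero => simp
  | succ n ih =>
    have : Real.pi * (n+1 : ℕ) = Real.pi * n + Real.pi := by push_cast; ring
    rw [this, Real.cos_add_pi, ih, pow_succ]; ring

private lemma sin_shift (N : ℕ) (ε : ℂ) :
    Complex.sin ((Real.pi:ℂ)*N + ε) = (-1)^N * Complex.sin ε := by
  rw [Complex.sin_add]
  have h1 : ((Real.pi:ℂ)*N) = ((Real.pi * N : ℝ) : ℂ) := by push_cast; ring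
  rw [h1, ← Complex.ofReal_sin, ← Complex.ofReal_cos]
  rw [show Real.sin (Real.pi * N) = 0 by rw [mul_comm]; exact Real.sin_nat_mul_pi N,
      real_cos_pi_nat]
  push_cast; ring

private lemma cos_shift (N : ℕ) (ε : ℂ) :
    Complex.cos ((Real.pi:ℂ)*N + ε) = (-1)^N * Complex.cos ε := by
  rw [Complex.cos_add]
  have h1 : ((Real.pi:ℂ)*N) = ((Real.pi * N : ℝ) : ℂ) := by push_cast; ring
  rw [h1, ← Complex.ofReal_sin, ← Complex.ofReal_cos]
  rw [show Real.sin (Real.pi * N) = 0 by rw [mul_comm]; exact Real.sin_nat_mul_pi N,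
      real_cos_pi_nat]
  push_cast; ring

noncomputable def PhiF (a b d : ℂ) (N : ℕ) (ε : ℂ) : ℂ :=
  ((Real.pi:ℂ)*N + ε)^2 * Complex.sin ε + a * ((Real.pi:ℂ)*N + ε) * Complex.cos ε
  + (-1:ℂ)^N * ((Real.pi:ℂ)*N + ε) * b + d * Complex.sin ε

private lemma hasDerivAt_PhiF (a b d : ℂ) (N : ℕ) (ε : ℂ) :
    HasDerivAt (PhiF a b d N)
      (2*((Real.pi:ℂ)*N + ε)*Complex.sin ε + ((Real.pi:ℂ)*N + ε)^2*Complex.cos ε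
       + a*Complex.cos ε - a*((Real.pi:ℂ)*N + ε)*Complex.sin ε + (-1:ℂ)^N*b
       + d*Complex.cos ε) ε := by
  unfold PhiF
  have hρ : HasDerivAt (fun ε : ℂ => (Real.pi:ℂ)*N + ε) 1 ε :=
    (hasDerivAt_id ε).const_add _
  have hsin := Complex.hasDerivAt_sin ε
  have hcos := Complex.hasDerivAt_cos ε
  have h1 : HasDerivAt (fun ε : ℂ => ((Real.pi:ℂ)*N + ε)^2 * Complex.sin ε)
      (2*((Real.pi:ℂ)*N + ε)*Complex.sin ε + ((Real.pi:ℂ)*N + ε)^2*Complex.cos ε) ε := by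
    have := ((hρ.pow 2).mul hsin)
    exact this.congr_deriv (by simp only [Pi.pow_apply]; norm_num)
  have h2 : HasDerivAt (fun ε : ℂ => a * ((Real.pi:ℂ)*N + ε) * Complex.cos ε)
      (a*Complex.cos ε - a*((Real.pi:ℂ)*N + ε)*Complex.sin ε) ε := by
    have := ((hρ.const_mul a).mul hcos)
    exact this.congr_deriv (by ring)
  have h3 : HasDerivAt (fun ε : ℂ => (-1:ℂ)^N * ((Real.pi:ℂ)*N + ε) * b)
      ((-1:ℂ)^N * b) ε := by
    have := ((hρ.const_mul ((-1:ℂ)^N)).mul_const b)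
    exact this.congr_deriv (by ring)
  have h4 : HasDerivAt (fun ε : ℂ => d * Complex.sin ε) (d * Complex.cos ε) ε :=
    hsin.const_mul d
  exact (((h1.add h2).add h3).add h4).congr_deriv (by ring)

private lemma final_ineq (M P r A B D' : ℝ) (hM1 : 1 ≤ M) (hP0 : 0 < P)
    (hr0 : 0 < r) (hr1 : r ≤ 1) (hPr : P*r ≤ 4*M) (hPbig : 18*M+18 ≤ P)
    (hA : A ≤ M-1) (hB : B ≤ M-1) (hD : D' ≤ M-1)
    (hA0 : 0 ≤ A) (hB0 : 0 ≤ B) (hD0 : 0 ≤ D') :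
    P^2*r^2 + (2*P*r + r^2)*2 + 2*(P+1)*(2*r) + A*2 + A*(P+1)*(2*r) + B + D'*2
      ≤ 1/2 * P^2 := by
  have hP2 : (18*M+18)^2 ≤ P^2 := by nlinarith
  have e1 : P^2*r^2 ≤ 16*M^2 := by nlinarith [mul_pos hP0 hr0]
  have q1 : (P+1)*r ≤ 4*M + 1 := by nlinarith
  have q2 : A * ((P+1)*r) ≤ (M-1)*(4*M+1) :=
    mul_le_mul hA q1 (by positivity) (by linarith)
  nlinarith [hP2, e1, q1, q2, hPr, hr1, hr0.le, hA, hB, hD, hM1]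

private lemma exists_root (a b d : ℂ) (M : ℝ)
    (hM : Complex.abs a + Complex.abs b + Complex.abs d + 1 ≤ M)
    (N : ℕ) (hN : 6*M + 6 ≤ (N:ℝ)) :
    ∃ ε : ℂ, Complex.abs ε ≤ M / N ∧ PhiF a b d N ε = 0 := by
  have hM1 : (1:ℝ) ≤ M := by
    have := Complex.abs.nonneg a; have := Complex.abs.nonneg b; have := Complex.abs.nonneg d
    linarith
  have hN12 : (12:ℝ) ≤ (N:ℝ) := by linarith
  have hN0 : (0:ℝ) < N := by linarith
  set P : ℝ := Real.pi * N with hPdef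
  have hpi3 : (3:ℝ) ≤ Real.pi := by linarith [Real.pi_gt_three]
  have hpi4 : Real.pi ≤ 4 := Real.pi_le_four
  have hP3 : 3 * (N:ℝ) ≤ P := by rw [hPdef]; nlinarith
  have hP4 : P ≤ 4 * (N:ℝ) := by rw [hPdef]; nlinarith
  have hP0 : 0 < P := by linarith
  set r : ℝ := M / N with hrdef
  have hr0 : 0 < r := div_pos (by linarith) hN0
  have hrN : r * N = M := div_mul_cancel₀ M (ne_of_gt hN0)
  have hr1 : r ≤ 1 := by rw [hrdef, div_le_one hN0]; linarith
  have hPr : P * r ≤ 4 * M := by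
    have h' := mul_le_mul_of_nonneg_right hP4 hr0.le
    nlinarith [hrN]
  have hPbig : 18*M + 18 ≤ P := by nlinarith
  clear_value P r
  -- complex constants
  set Pc : ℂ := (Real.pi:ℂ)*N with hPcdef
  have hPcabs : Complex.abs Pc = P := by
    rw [hPcdef, hPdef, map_mul, Complex.abs_ofReal, abs_of_pos Real.pi_pos]
    simp
  have hPcne : Pc ≠ 0 := by
    intro h; rw [h] at hPcabs; simp at hPcabs; linarith
  clear_value Pc
  set T : ℂ → ℂ := fun ε => ε - PhiF a b d N ε / Pc^2 with hTdef
  set s : Set ℂ := closedBall (0:ℂ) r with hsdef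
  -- derivative bound on s
  have hderiv : ∀ ε : ℂ, HasDerivAt T
      (1 - (2*(Pc + ε)*Complex.sin ε + (Pc + ε)^2*Complex.cos ε
       + a*Complex.cos ε - a*(Pc + ε)*Complex.sin ε + (-1:ℂ)^N*b
       + d*Complex.cos ε) / Pc^2) ε := by
    intro ε
    rw [hTdef, hPcdef]
    exact (hasDerivAt_id ε).sub ((hasDerivAt_PhiF a b d N ε).div_const (((Real.pi:ℂ)*N)^2))
  have hbound : ∀ ε ∈ s, Complex.abs
      (1 - (2*(Pc + ε)*Complex.sin ε + (Pc + ε)^2*Complex.cos ε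
       + a*Complex.cos ε - a*(Pc + ε)*Complex.sin ε + (-1:ℂ)^N*b
       + d*Complex.cos ε) / Pc^2) ≤ 1/2 := by
    intro ε hε
    rw [hsdef, mem_closedBall, dist_zero_right, Complex.norm_eq_abs] at hε
    have hε1 : Complex.abs ε ≤ 1 := le_trans hε hr1
    set D : ℂ := 2*(Pc + ε)*Complex.sin ε + (Pc + ε)^2*Complex.cos ε
       + a*Complex.cos ε - a*(Pc + ε)*Complex.sin ε + (-1:ℂ)^N*b
       + d*Complex.cos ε with hDdef
    have key : 1 - D / Pc^2 = (Pc^2 - D) / Pc^2 := by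
      field_simp
    rw [key, map_div₀, map_pow, hPcabs]
    rw [div_le_iff₀ (by positivity)]
    have hiden : Pc^2 - D = Pc^2*(1 - Complex.cos ε) - (2*Pc*ε + ε^2)*Complex.cos ε
        - 2*(Pc+ε)*Complex.sin ε - a*Complex.cos ε + a*(Pc+ε)*Complex.sin ε
        - (-1:ℂ)^N * b - d*Complex.cos ε := by
      rw [hDdef]; ring
    have habsρ : Complex.abs (Pc + ε) ≤ P + 1 := by
      calc Complex.abs (Pc + ε) ≤ Complex.abs Pc + Complex.abs ε := Complex.abs.add_le _ _
        _ ≤ P + 1 := by rw [hPcabs]; linarith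
    have hsin := abs_sin_le' hε1
    have hcos := abs_cos_le' hε1
    have honecos := abs_one_sub_cos' hε1
    have hwb : Complex.abs ((-1:ℂ)^N * b) = Complex.abs b := by
      rw [map_mul, map_pow]; simp
    have h1 : Complex.abs (Pc^2*(1 - Complex.cos ε)) ≤ P^2 * r^2 := by
      rw [map_mul, map_pow, hPcabs]
      have : Complex.abs ε ^2 ≤ r^2 := by nlinarith [Complex.abs.nonneg ε]
      nlinarith [pow_nonneg (le_of_lt hP0) 2, Complex.abs.nonneg (1 - Complex.cos ε)]
    have h2 : Complex.abs ((2*Pc*ε + ε^2)*Complex.cos ε) ≤ (2*P*r + r^2)*2 := by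
      rw [map_mul]
      have : Complex.abs (2*Pc*ε + ε^2) ≤ 2*P*r + r^2 := by
        calc Complex.abs (2*Pc*ε + ε^2) ≤ Complex.abs (2*Pc*ε) + Complex.abs (ε^2) :=
              Complex.abs.add_le _ _
          _ ≤ 2*P*r + r^2 := by
              rw [map_mul, map_mul, map_pow, hPcabs]
              simp only [Complex.abs_two]
              nlinarith [Complex.abs.nonneg ε, hP0]
      nlinarith [Complex.abs.nonneg (2*Pc*ε + ε^2), Complex.abs.nonneg (Complex.cos ε)]
    have h3 : Complex.abs (2*(Pc+ε)*Complex.sin ε) ≤ 2*(P+1)*(2*r) := by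
      rw [map_mul, map_mul]
      simp only [Complex.abs_two]
      nlinarith [Complex.abs.nonneg (Pc+ε), Complex.abs.nonneg (Complex.sin ε), Complex.abs.nonneg ε]
    have h4 : Complex.abs (a*Complex.cos ε) ≤ Complex.abs a * 2 := by
      rw [map_mul]; nlinarith [Complex.abs.nonneg a]
    have h5 : Complex.abs (a*(Pc+ε)*Complex.sin ε) ≤ Complex.abs a * (P+1) * (2*r) := by
      rw [map_mul, map_mul]
      have hs2 : Complex.abs (Complex.sin ε) ≤ 2*r := by linarith
      gcongr
    have h6 : Complex.abs (d*Complex.cos ε) ≤ Complex.abs d * 2 := by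
      rw [map_mul]; nlinarith [Complex.abs.nonneg d]
    have htri : Complex.abs (Pc^2 - D) ≤ P^2*r^2 + (2*P*r + r^2)*2 + 2*(P+1)*(2*r)
        + Complex.abs a * 2 + Complex.abs a * (P+1)*(2*r) + Complex.abs b
        + Complex.abs d * 2 := by
      rw [hiden]
      calc Complex.abs (Pc^2*(1 - Complex.cos ε) - (2*Pc*ε + ε^2)*Complex.cos ε
            - 2*(Pc+ε)*Complex.sin ε - a*Complex.cos ε + a*(Pc+ε)*Complex.sin ε
            - (-1:ℂ)^N * b - d*Complex.cos ε)
          ≤ Complex.abs (Pc^2*(1 - Complex.cos ε) - (2*Pc*ε + ε^2)*Complex.cos ε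
            - 2*(Pc+ε)*Complex.sin ε - a*Complex.cos ε + a*(Pc+ε)*Complex.sin ε
            - (-1:ℂ)^N * b) + Complex.abs (d*Complex.cos ε) := Complex.abs.sub_le_add _ _
        _ ≤ Complex.abs (Pc^2*(1 - Complex.cos ε) - (2*Pc*ε + ε^2)*Complex.cos ε
            - 2*(Pc+ε)*Complex.sin ε - a*Complex.cos ε + a*(Pc+ε)*Complex.sin ε)
            + Complex.abs ((-1:ℂ)^N * b) + Complex.abs (d*Complex.cos ε) := by
              gcongr; exact Complex.abs.sub_le_add _ _
        _ ≤ Complex.abs (Pc^2*(1 - Complex.cos ε) - (2*Pc*ε + ε^2)*Complex.cos ε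
            - 2*(Pc+ε)*Complex.sin ε - a*Complex.cos ε) + Complex.abs (a*(Pc+ε)*Complex.sin ε)
            + Complex.abs ((-1:ℂ)^N * b) + Complex.abs (d*Complex.cos ε) := by
              gcongr; exact Complex.abs.add_le _ _
        _ ≤ Complex.abs (Pc^2*(1 - Complex.cos ε) - (2*Pc*ε + ε^2)*Complex.cos ε
            - 2*(Pc+ε)*Complex.sin ε) + Complex.abs (a*Complex.cos ε)
            + Complex.abs (a*(Pc+ε)*Complex.sin ε)
            + Complex.abs ((-1:ℂ)^N * b) + Complex.abs (d*Complex.cos ε) := by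
              gcongr; exact Complex.abs.sub_le_add _ _
        _ ≤ Complex.abs (Pc^2*(1 - Complex.cos ε) - (2*Pc*ε + ε^2)*Complex.cos ε)
            + Complex.abs (2*(Pc+ε)*Complex.sin ε) + Complex.abs (a*Complex.cos ε)
            + Complex.abs (a*(Pc+ε)*Complex.sin ε)
            + Complex.abs ((-1:ℂ)^N * b) + Complex.abs (d*Complex.cos ε) := by
              gcongr; exact Complex.abs.sub_le_add _ _
        _ ≤ Complex.abs (Pc^2*(1 - Complex.cos ε)) + Complex.abs ((2*Pc*ε + ε^2)*Complex.cos ε)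
            + Complex.abs (2*(Pc+ε)*Complex.sin ε) + Complex.abs (a*Complex.cos ε)
            + Complex.abs (a*(Pc+ε)*Complex.sin ε)
            + Complex.abs ((-1:ℂ)^N * b) + Complex.abs (d*Complex.cos ε) := by
              gcongr; exact Complex.abs.sub_le_add _ _
        _ ≤ P^2*r^2 + (2*P*r + r^2)*2 + 2*(P+1)*(2*r)
            + Complex.abs a * 2 + Complex.abs a * (P+1)*(2*r) + Complex.abs b
            + Complex.abs d * 2 := by
              rw [hwb]; gcongr <;> first | exact h1 | exact h2 | exact h3 | exact h4 | exact h5 | exact h6 | rfl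
    refine le_trans htri ?_
    have hA : Complex.abs a ≤ M - 1 := by
      have := Complex.abs.nonneg b; have := Complex.abs.nonneg d; linarith
    have hB : Complex.abs b ≤ M - 1 := by
      have := Complex.abs.nonneg a; have := Complex.abs.nonneg d; linarith
    have hD : Complex.abs d ≤ M - 1 := by
      have := Complex.abs.nonneg a; have := Complex.abs.nonneg b; linarith
    exact final_ineq M P r _ _ _ hM1 hP0 hr0 hr1 hPr hPbig hA hB hD
      (Complex.abs.nonneg a) (Complex.abs.nonneg b) (Complex.abs.nonneg d)
  -- Lipschitz estimate on s via mean value inequality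
  have hconv : Convex ℝ s := by rw [hsdef]; exact convex_closedBall _ _
  have hlip : ∀ x ∈ s, ∀ y ∈ s, ‖T y - T x‖ ≤ (1/2 : ℝ) * ‖y - x‖ := by
    intro x hx y hy
    exact hconv.norm_image_sub_le_of_norm_hasDerivWithin_le
      (fun z _ => (hderiv z).hasDerivWithinAt)
      (fun z hz => by simpa [Complex.norm_eq_abs] using hbound z hz) hx hy
  have h0s : (0:ℂ) ∈ s := by rw [hsdef]; exact mem_closedBall_self hr0.le
  have hT0 : T 0 = -((a + (-1:ℂ)^N * b)/Pc) := by
    rw [hTdef]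
    simp only
    unfold PhiF
    rw [← hPcdef]
    simp only [Complex.sin_zero, Complex.cos_zero, mul_zero, zero_mul, add_zero, mul_one]
    field_simp
    ring
  have hT0abs : Complex.abs (T 0) ≤ r/2 := by
    rw [hT0, map_neg_eq_map, map_div₀, hPcabs, div_le_iff₀ hP0]
    have habsnum : Complex.abs (a + (-1:ℂ)^N * b) ≤ M - 1 := by
      calc Complex.abs (a + (-1:ℂ)^N * b) ≤ Complex.abs a + Complex.abs ((-1:ℂ)^N * b) :=
            Complex.abs.add_le _ _
        _ ≤ M - 1 := by
            rw [map_mul, map_pow]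
            simp only [map_neg_eq_map, map_one, one_pow, one_mul]
            have := Complex.abs.nonneg d; linarith
    have hrP : 3*M ≤ r * P := by
      have : r * (3*(N:ℝ)) ≤ r * P := by nlinarith
      nlinarith [hrN]
    linarith
  have hmaps : Set.MapsTo T s s := by
    intro ε hε
    have h1 := hlip 0 h0s ε hε
    have h2 : ‖T ε‖ ≤ ‖T ε - T 0‖ + ‖T 0‖ := by
      have := norm_add_le (T ε - T 0) (T 0); simpa using this
    have hε' : ‖ε‖ ≤ r := by
      rw [hsdef, mem_closedBall, dist_zero_right] at hε; exact hε
    rw [hsdef, mem_closedBall, dist_zero_right]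
    have hT0' : ‖T 0‖ ≤ r/2 := hT0abs
    have : ‖T ε - T 0‖ ≤ (1/2)*r := by
      have := h1; simp only [sub_zero] at this; linarith
    linarith
  haveI hcs : CompleteSpace s := by
    have : IsClosed s := by rw [hsdef]; exact isClosed_closedBall
    exact this.completeSpace_coe
  haveI : Nonempty s := ⟨⟨0, h0s⟩⟩
  set f : s → s := fun x => ⟨T x, hmaps x.2⟩ with hfdef
  have hcontr : ContractingWith (1/2 : ℝ≥0) f := by
    constructor
    · rw [← NNReal.coe_lt_coe]; norm_num
    · apply LipschitzWith.of_dist_le_mul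
      intro x y
      rw [Subtype.dist_eq (f x) (f y), Subtype.dist_eq x y, dist_eq_norm, dist_eq_norm]
      have hc : ((1/2 : ℝ≥0) : ℝ) = 1/2 := by norm_num
      rw [hc]
      exact hlip (y:ℂ) y.2 (x:ℂ) x.2
  obtain ⟨x, hx⟩ : ∃ x : s, f x = x := ⟨hcontr.fixedPoint f, hcontr.fixedPoint_isFixedPt⟩
  have hTx : T (x:ℂ) = (x:ℂ) := congrArg Subtype.val hx
  have hPhix : PhiF a b d N (x:ℂ) = 0 := by
    rw [hTdef] at hTx
    simp only at hTx
    have h' : PhiF a b d N (x:ℂ) / Pc^2 = 0 := by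
      have := sub_eq_self.mp hTx
      exact this
    rcases div_eq_zero_iff.mp h' with h | h
    · exact h
    · exact absurd h (pow_ne_zero 2 hPcne)
  refine ⟨(x:ℂ), ?_, hPhix⟩
  have h2 : (x:ℂ) ∈ closedBall (0:ℂ) r := by rw [← hsdef]; exact x.2
  rw [mem_closedBall, dist_zero_right, Complex.norm_eq_abs] at h2
  exact h2

private lemma root_asymp (a b d : ℂ) (M : ℝ)
    (hM : Complex.abs a + Complex.abs b + Complex.abs d + 1 ≤ M)
    (N : ℕ) (hN : 6*M + 6 ≤ (N:ℝ)) (ε : ℂ) (hε : Complex.abs ε ≤ M/N)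
    (hPhi : PhiF a b d N ε = 0) :
    Complex.abs (ε + (a + (-1:ℂ)^N * b)/((Real.pi:ℂ)*N)) ≤ 100*M^3/(N:ℝ)^2 := by
  have hM1 : (1:ℝ) ≤ M := by
    have := Complex.abs.nonneg a; have := Complex.abs.nonneg b; have := Complex.abs.nonneg d
    linarith
  have hN0 : (0:ℝ) < N := by linarith
  have hpi3 : (3:ℝ) ≤ Real.pi := by linarith [Real.pi_gt_three]
  have hpi4 : Real.pi ≤ 4 := Real.pi_le_four
  set P : ℝ := Real.pi * N with hPdef
  have hP3 : 3 * (N:ℝ) ≤ P := by rw [hPdef]; nlinarith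
  have hP4 : P ≤ 4 * (N:ℝ) := by rw [hPdef]; nlinarith
  have hP0 : 0 < P := by linarith
  set r : ℝ := M / N with hrdef
  have hr0 : 0 < r := div_pos (by linarith) hN0
  have hrN : r * N = M := div_mul_cancel₀ M (ne_of_gt hN0)
  have hr1 : r ≤ 1 := by rw [hrdef, div_le_one hN0]; linarith
  have hε1 : Complex.abs ε ≤ 1 := le_trans hε hr1
  have hεr : Complex.abs ε ≤ r := le_of_le_of_eq hε hrdef.symm
  set Pc : ℂ := (Real.pi:ℂ)*N with hPcdef
  have hPcabs : Complex.abs Pc = P := by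
    rw [hPcdef, hPdef, map_mul, Complex.abs_ofReal, abs_of_pos Real.pi_pos]; simp
  have hPcne : Pc ≠ 0 := fun h => by rw [h] at hPcabs; simp at hPcabs; linarith
  clear_value P r
  set ρ : ℂ := Pc + ε with hρdef
  have hρabs : P - 1 ≤ Complex.abs ρ := by
    have h1 : Complex.abs Pc ≤ Complex.abs ρ + Complex.abs ε := by
      calc Complex.abs Pc = Complex.abs (ρ - ε) := by rw [hρdef]; ring_nf
        _ ≤ Complex.abs ρ + Complex.abs ε := Complex.abs.sub_le_add _ _
    rw [hPcabs] at h1; linarith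
  have hρ2 : (2:ℝ) ≤ Complex.abs ρ := by nlinarith
  have hρne : ρ ≠ 0 := fun h => by rw [h] at hρ2; simp at hρ2; linarith
  have hρub : Complex.abs ρ ≤ P + 1 := by
    calc Complex.abs ρ ≤ Complex.abs Pc + Complex.abs ε := Complex.abs.add_le _ _
      _ ≤ P + 1 := by rw [hPcabs]; linarith
  -- key identity from PhiF = 0
  set E : ℂ := a*(1 - Complex.cos ε) - d*(Complex.sin ε/ρ) + ρ*(ε - Complex.sin ε) - ε^2 with hEdef
  have hmul : Pc*ε + (a + (-1:ℂ)^N * b) = E := by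
    rw [hEdef, hρdef]
    unfold PhiF at hPhi
    rw [← hPcdef] at hPhi
    have hρne' : Pc + ε ≠ 0 := hρne
    field_simp
    linear_combination hPhi
  have hG : ε + (a + (-1:ℂ)^N * b)/Pc = E/Pc := by
    rw [← hmul]; field_simp
  rw [hG, map_div₀, hPcabs]
  -- bound abs E
  have hcos := abs_one_sub_cos' hε1
  have hsinsub := abs_sin_sub_self' hε1
  have hsin := abs_sin_le' hε1
  have hA : Complex.abs a ≤ M := by
    have := Complex.abs.nonneg b; have := Complex.abs.nonneg d; linarith
  have hD : Complex.abs d ≤ M := by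
    have := Complex.abs.nonneg a; have := Complex.abs.nonneg b; linarith
  have hεsq : Complex.abs ε ^ 2 ≤ r^2 := by nlinarith [Complex.abs.nonneg ε]
  have e1 : Complex.abs (a*(1 - Complex.cos ε)) ≤ M * r^2 := by
    rw [map_mul]
    nlinarith [Complex.abs.nonneg a, Complex.abs.nonneg (1 - Complex.cos ε), hM1]
  have e2 : Complex.abs (d*(Complex.sin ε/ρ)) ≤ M * r := by
    rw [map_mul, map_div₀]
    have h2 : Complex.abs (Complex.sin ε) / Complex.abs ρ ≤ r := by
      calc Complex.abs (Complex.sin ε) / Complex.abs ρ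
          ≤ 2 * Complex.abs ε / 2 := by
            apply div_le_div₀ (by positivity) hsin (by norm_num) hρ2
        _ = Complex.abs ε := by ring
        _ ≤ r := hεr
    exact mul_le_mul hD h2 (by positivity) (by linarith)
  have e3 : Complex.abs (ρ*(ε - Complex.sin ε)) ≤ 2*P*r^2 := by
    rw [map_mul]
    have h1 : Complex.abs (ε - Complex.sin ε) ≤ r^2 := by
      rw [← map_neg_eq_map]
      have h : -(ε - Complex.sin ε) = Complex.sin ε - ε := by ring
      rw [h]; linarith
    have h2 : Complex.abs ρ ≤ 2*P := by linarith
    exact mul_le_mul h2 h1 (Complex.abs.nonneg _) (by positivity)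
  have e4 : Complex.abs ((ε:ℂ)^2) ≤ r^2 := by rw [map_pow]; exact hεsq
  have habsE : Complex.abs E ≤ M*r^2 + M*r + 2*P*r^2 + r^2 := by
    rw [hEdef]
    calc Complex.abs (a*(1 - Complex.cos ε) - d*(Complex.sin ε/ρ) + ρ*(ε - Complex.sin ε) - ε^2)
        ≤ Complex.abs (a*(1 - Complex.cos ε) - d*(Complex.sin ε/ρ) + ρ*(ε - Complex.sin ε))
          + Complex.abs ((ε:ℂ)^2) := Complex.abs.sub_le_add _ _
      _ ≤ Complex.abs (a*(1 - Complex.cos ε) - d*(Complex.sin ε/ρ))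
          + Complex.abs (ρ*(ε - Complex.sin ε)) + Complex.abs ((ε:ℂ)^2) := by
            gcongr; exact Complex.abs.add_le _ _
      _ ≤ Complex.abs (a*(1 - Complex.cos ε)) + Complex.abs (d*(Complex.sin ε/ρ))
          + Complex.abs (ρ*(ε - Complex.sin ε)) + Complex.abs ((ε:ℂ)^2) := by
            gcongr; exact Complex.abs.sub_le_add _ _
      _ ≤ M*r^2 + M*r + 2*P*r^2 + r^2 := by gcongr
  rw [div_le_div_iff₀ hP0 (by positivity)]
  have hrN2 : r^2 * (N:ℝ)^2 = M^2 := by nlinarith [hrN]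
  calc Complex.abs E * (N:ℝ)^2 ≤ (M*r^2 + M*r + 2*P*r^2 + r^2) * (N:ℝ)^2 := by
        gcongr
    _ = M*(r^2*(N:ℝ)^2) + M*(r*(N:ℝ))*(N:ℝ) + 2*P*(r^2*(N:ℝ)^2) + r^2*(N:ℝ)^2 := by ring
    _ = M^3 + M^2*(N:ℝ) + 2*P*M^2 + M^2 := by rw [hrN2, hrN]; ring
    _ ≤ 100 * M ^ 3 * P := by
        have hP1 : (1:ℝ) ≤ P := by linarith
        have q1 : M^2*(N:ℝ) ≤ M^2*P := by nlinarith
        have q2 : M^2 ≤ M^3 := by nlinarith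
        have q3 : M^3 ≤ M^3*P := by nlinarith
        have q4 : M^2*P ≤ M^3*P := by nlinarith
        nlinarith [q1, q2, q3, q4]

private lemma eigen_exists (c0 f0 c1 f1 : ℂ) (N : ℕ) (ε : ℂ)
    (hPhi : PhiF (c0-f1) (f0-c1) (c0*f1-c1*f0) N ε = 0)
    (hAne : ((Real.pi:ℂ)*N + ε) + f0 * Complex.sin ((Real.pi:ℂ)*N + ε) ≠ 0) :
    ∃ y : ℝ → ℂ, ContDiff ℝ 2 y ∧ (∃ x ∈ Set.Icc (0:ℝ) 1, y x ≠ 0) ∧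
      (∀ x ∈ Set.Icc (0:ℝ) 1, -(deriv (deriv y) x) = ((Real.pi:ℂ)*N + ε)^2 * y x) ∧
      deriv y 0 + c0 * y 0 + f0 * y 1 = 0 ∧
      deriv y 1 + c1 * y 0 + f1 * y 1 = 0 := by
  set ρ : ℂ := (Real.pi:ℂ)*N + ε with hρdef
  set A : ℂ := ρ + f0 * Complex.sin ρ with hAdef
  set B : ℂ := -(c0 + f0 * Complex.cos ρ) with hBdef
  set y : ℝ → ℂ := fun x => A * Complex.cos (ρ*x) + B * Complex.sin (ρ*x) with hydef
  set y₁ : ℝ → ℂ := fun x => (-A * Complex.sin (ρ*x) + B * Complex.cos (ρ*x)) * ρ with hy₁def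
  set y₂ : ℝ → ℂ := fun x => (-A * Complex.cos (ρ*x) - B * Complex.sin (ρ*x)) * ρ^2 with hy₂def
  -- basic derivative facts
  have hlin : ∀ x : ℝ, HasDerivAt (fun z : ℂ => ρ * z) ρ (x:ℂ) := by
    intro x
    simpa using (hasDerivAt_id ((x:ℝ):ℂ)).const_mul ρ
  have hcosd : ∀ x : ℝ, HasDerivAt (fun t : ℝ => Complex.cos (ρ*t)) (-Complex.sin (ρ*x)*ρ) x := by
    intro x
    have h2 := (Complex.hasDerivAt_cos (ρ*(x:ℂ))).comp (x:ℂ) (hlin x)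
    exact h2.comp_ofReal
  have hsind : ∀ x : ℝ, HasDerivAt (fun t : ℝ => Complex.sin (ρ*t)) (Complex.cos (ρ*x)*ρ) x := by
    intro x
    have h2 := (Complex.hasDerivAt_sin (ρ*(x:ℂ))).comp (x:ℂ) (hlin x)
    exact h2.comp_ofReal
  have hy1 : ∀ x : ℝ, HasDerivAt y (y₁ x) x := by
    intro x
    have h := ((hcosd x).const_mul A).add ((hsind x).const_mul B)
    rw [hydef, hy₁def]
    exact h.congr_deriv (by beta_reduce; ring)
  have hy2 : ∀ x : ℝ, HasDerivAt y₁ (y₂ x) x := by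
    intro x
    have h := (((hsind x).const_mul (-A)).add ((hcosd x).const_mul B)).mul_const ρ
    rw [hy₁def, hy₂def]
    exact h.congr_deriv (by beta_reduce; ring)
  have hdy : deriv y = y₁ := funext fun x => (hy1 x).deriv
  have hddy : deriv (deriv y) = y₂ := by rw [hdy]; exact funext fun x => (hy2 x).deriv
  -- contdiff
  have hlincd : ContDiff ℝ 2 (fun x : ℝ => ρ * (x:ℂ)) :=
    contDiff_const.mul Complex.ofRealCLM.contDiff
  have hccd : ContDiff ℝ 2 (fun x : ℝ => Complex.cos (ρ*x)) :=
    (Complex.contDiff_cos.restrict_scalars ℝ).comp hlincd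
  have hscd : ContDiff ℝ 2 (fun x : ℝ => Complex.sin (ρ*x)) :=
    (Complex.contDiff_sin.restrict_scalars ℝ).comp hlincd
  have hycd : ContDiff ℝ 2 y := by
    rw [hydef]
    exact (contDiff_const.mul hccd).add (contDiff_const.mul hscd)
  -- evaluations
  have hz : ρ * ((0:ℝ):ℂ) = 0 := by simp
  have ho : ρ * ((1:ℝ):ℂ) = ρ := by simp
  have hy0 : y 0 = A := by rw [hydef]; simp
  have hy1' : y 1 = A * Complex.cos ρ + B * Complex.sin ρ := by
    rw [hydef]; simp
  have hdy0 : deriv y 0 = B * ρ := by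
    rw [hdy, hy₁def]; simp
  have hdy1 : deriv y 1 = (-A * Complex.sin ρ + B * Complex.cos ρ) * ρ := by
    rw [hdy, hy₁def]; simp
  refine ⟨y, hycd, ⟨0, by norm_num, ?_⟩, ?_, ?_, ?_⟩
  · rw [hy0, hAdef]; exact hAne
  · intro x _
    rw [hddy, hy₂def, hydef]
    simp only
    ring
  · rw [hdy0, hy0, hy1', hAdef, hBdef]
    ring
  · rw [hdy1, hy0, hy1', hAdef, hBdef]
    rw [sin_shift, cos_shift]
    have hw : ((-1:ℂ)^N)^2 = 1 := by
      rw [← pow_mul, mul_comm, pow_mul, neg_one_sq, one_pow]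
    have hsc : Complex.sin ε ^ 2 + Complex.cos ε ^ 2 = 1 := Complex.sin_sq_add_cos_sq ε
    unfold PhiF at hPhi
    rw [← hρdef] at hPhi
    linear_combination (-(-1:ℂ)^N) * hPhi + (-(f0*((-1:ℂ)^N)^2*ρ)) * hsc + (-(c1*ρ)) * hw


/-- Appendix, part 1: asymptotics of the square roots of the eigenvalues for
the boundary conditions `y′(0) + c₀y(0) + f₀y(1) = 0`,
`y′(1) + c₁y(0) + f₁y(1) = 0`:
`ρ_N = πN + (f₁ − c₀)/(πN) + (−1)^N (c₁ − f₀)/(πN) + O(N⁻²)`. -/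
theorem eigenvalue_asymptotics_both_order_one (c0 f0 c1 f1 : ℂ) :
    ∃ C : ℝ, 0 < C ∧ ∃ N₀ : ℕ, 1 ≤ N₀ ∧ ∃ ρ : ℕ → ℂ,
      ∀ N : ℕ, N₀ ≤ N →
        (∃ y : ℝ → ℂ, ContDiff ℝ 2 y ∧ (∃ x ∈ Set.Icc (0:ℝ) 1, y x ≠ 0) ∧
          (∀ x ∈ Set.Icc (0:ℝ) 1, -(deriv (deriv y) x) = (ρ N) ^ 2 * y x) ∧
          deriv y 0 + c0 * y 0 + f0 * y 1 = 0 ∧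
          deriv y 1 + c1 * y 0 + f1 * y 1 = 0) ∧
        ‖ρ N - (Real.pi : ℂ) * N - (f1 - c0) / ((Real.pi : ℂ) * N)
            - (-1 : ℂ) ^ N * (c1 - f0) / ((Real.pi : ℂ) * N)‖
          ≤ C / (N : ℝ) ^ 2 := by
  have hπ3 : (3:ℝ) ≤ Real.pi := by linarith [Real.pi_gt_three]
  set a : ℂ := c0 - f1 with hadef
  set b : ℂ := f0 - c1 with hbdef
  set d : ℂ := c0*f1 - c1*f0 with hddef
  set M : ℝ := Complex.abs a + Complex.abs b + Complex.abs d + Complex.abs f0 + 1 with hMdef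
  have habsf0 : Complex.abs f0 ≤ M - 1 := by
    have := Complex.abs.nonneg a; have := Complex.abs.nonneg b
    have := Complex.abs.nonneg d; rw [hMdef]; linarith
  have hM : Complex.abs a + Complex.abs b + Complex.abs d + 1 ≤ M := by
    have := Complex.abs.nonneg f0; rw [hMdef]; linarith
  have hM1 : (1:ℝ) ≤ M := by
    have := Complex.abs.nonneg a; have := Complex.abs.nonneg b
    have := Complex.abs.nonneg d; have := Complex.abs.nonneg f0
    rw [hMdef]; linarith
  clear_value M
  set N₀ : ℕ := ⌈6*M + 6⌉₊ with hN₀def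
  have hN₀1 : 1 ≤ N₀ := by
    rw [hN₀def]
    exact Nat.one_le_iff_ne_zero.mpr (by positivity)
  have hNR : ∀ N : ℕ, N₀ ≤ N → 6*M + 6 ≤ (N:ℝ) := by
    intro N h
    have h1 : (6*M+6 : ℝ) ≤ (N₀ : ℝ) := by rw [hN₀def]; exact Nat.le_ceil _
    have h2 : (N₀ : ℝ) ≤ (N : ℝ) := Nat.cast_le.mpr h
    linarith
  have hex : ∀ N : ℕ, ∃ ε : ℂ, N₀ ≤ N →
      Complex.abs ε ≤ M/(N:ℝ) ∧ PhiF a b d N ε = 0 := by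
    intro N
    by_cases h : N₀ ≤ N
    · obtain ⟨ε, h1, h2⟩ := exists_root a b d M hM N (hNR N h)
      exact ⟨ε, fun _ => ⟨h1, h2⟩⟩
    · exact ⟨0, fun hc => absurd hc h⟩
  choose εf hεf using hex
  refine ⟨100*M^3, by positivity, N₀, hN₀1, fun N => (Real.pi:ℂ)*N + εf N, ?_⟩
  intro N hN
  obtain ⟨hb1, hb2⟩ := hεf N hN
  have hN6 : 6*M + 6 ≤ (N:ℝ) := hNR N hN
  have hN0 : (0:ℝ) < (N:ℝ) := by linarith
  have hMN1 : M/(N:ℝ) ≤ 1 := by rw [div_le_one hN0]; linarith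
  have hε1 : Complex.abs (εf N) ≤ 1 := le_trans hb1 hMN1
  constructor
  · -- the eigenfunction
    apply eigen_exists c0 f0 c1 f1 N (εf N)
    · rw [← hadef, ← hbdef, ← hddef]; exact hb2
    · -- A ≠ 0
      intro hc
      have hsinρ : Complex.sin ((Real.pi:ℂ)*N + εf N) = (-1)^N * Complex.sin (εf N) :=
        sin_shift N (εf N)
      have habs_sinρ : Complex.abs (Complex.sin ((Real.pi:ℂ)*N + εf N)) ≤ 2 := by
        rw [hsinρ, map_mul, map_pow]
        simp only [map_neg_eq_map, map_one, one_pow, one_mul]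
        have := abs_sin_le' hε1
        linarith
      have hρeq : ((Real.pi:ℂ)*N + εf N) = -(f0 * Complex.sin ((Real.pi:ℂ)*N + εf N)) :=
        eq_neg_of_add_eq_zero_left hc
      have hPabs : Complex.abs ((Real.pi:ℂ)*(N:ℂ)) = Real.pi * N := by
        rw [map_mul, Complex.abs_ofReal, abs_of_pos Real.pi_pos]; simp
      have hlow : Real.pi * N - 1 ≤ Complex.abs ((Real.pi:ℂ)*N + εf N) := by
        have h1 : Complex.abs ((Real.pi:ℂ)*(N:ℂ)) ≤
            Complex.abs ((Real.pi:ℂ)*N + εf N) + Complex.abs (εf N) := by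
          calc Complex.abs ((Real.pi:ℂ)*(N:ℂ))
              = Complex.abs (((Real.pi:ℂ)*N + εf N) - εf N) := by ring_nf
            _ ≤ Complex.abs ((Real.pi:ℂ)*N + εf N) + Complex.abs (εf N) :=
                Complex.abs.sub_le_add _ _
        rw [hPabs] at h1; linarith
      have hup : Complex.abs ((Real.pi:ℂ)*N + εf N) ≤ (M-1) * 2 := by
        rw [hρeq, map_neg_eq_map, map_mul]
        exact mul_le_mul habsf0 habs_sinρ (Complex.abs.nonneg _) (by linarith)
      have hπN : 3 * (N:ℝ) ≤ Real.pi * N := by nlinarith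
      linarith
  · -- the asymptotic bound
    have heq : ((Real.pi:ℂ)*N + εf N) - (Real.pi:ℂ)*N - (f1 - c0)/((Real.pi:ℂ)*N)
        - (-1:ℂ)^N * (c1 - f0)/((Real.pi:ℂ)*N)
        = εf N + (a + (-1:ℂ)^N * b)/((Real.pi:ℂ)*N) := by
      rw [hadef, hbdef]; ring
    rw [heq]
    exact root_asymp a b d M hM N hN6 (εf N) hb1 hb2
end
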